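/- For every n ≥ 2, ⌊(3n+4)/4⌋ ≤ γ_MB(P_3 □ P_n) ≤ (4n + σ(n))/3, where σ(n) = 0 if 3 | n, σ(n) = −1 if n ≡ 1 (mod 3), and σ(n) = 1 if n ≡ 2 (mod 3). -/

import Mathlib

open SimpleGraph

namespace MBD

variable {V : Type*}

/-- Dominator's claimed set `D` is a dominating set of `G`. -/
def Dominates (G : SimpleGraph V) (D : Finset V) : Prop :=
  ∀ v : V, ∃ d ∈ D, d = v ∨ G.Adj d v

/-- Staller's claimed set `S` contains the whole closed neighborhood of some vertex. -/
def StallerWinSet (G : SimpleGraph V) (S : Finset V) : Prop :=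
  ∃ v : V, ∀ u : V, (u = v ∨ G.Adj u v) → u ∈ S

variable [DecidableEq V]

mutual
  /-- `DomD G k D S`: with Dominator having claimed `D`, Staller `S`, and Dominator to
  move, Dominator has a strategy winning the Maker-Breaker domination game on `G`
  using at most `k` further moves of his own. -/
  inductive DomD (G : SimpleGraph V) : ℕ → Finset V → Finset V → Prop
    | win {k : ℕ} {D S : Finset V} : Dominates G D → DomD G k D S
    | move {k : ℕ} {D S : Finset V} (v : V) : v ∉ D → v ∉ S →
        DomS G k (insert v D) S → DomD G (k + 1) D S
  /-- Like `DomD`, but it is Staller's turn to move. -/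
  inductive DomS (G : SimpleGraph V) : ℕ → Finset V → Finset V → Prop
    | win {k : ℕ} {D S : Finset V} : Dominates G D → DomS G k D S
    | move {k : ℕ} {D S : Finset V} : (∃ v : V, v ∉ D ∧ v ∉ S) →
        (∀ v : V, v ∉ D → v ∉ S → DomD G k D (insert v S)) → DomS G k D S
end

mutual
  /-- `StallD G k D S`: with Dominator having claimed `D`, Staller `S`, and Dominator to
  move, Staller has a strategy winning (claiming a whole closed neighborhood) within at
  most `k` further moves of her own. -/
  inductive StallD (G : SimpleGraph V) : ℕ → Finset V → Finset V → Prop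
    | win {k : ℕ} {D S : Finset V} : StallerWinSet G S → StallD G k D S
    | move {k : ℕ} {D S : Finset V} : (∃ v : V, v ∉ D ∧ v ∉ S) →
        (∀ v : V, v ∉ D → v ∉ S → StallS G k (insert v D) S) → StallD G k D S
  /-- Like `StallD`, but it is Staller's turn to move. -/
  inductive StallS (G : SimpleGraph V) : ℕ → Finset V → Finset V → Prop
    | win {k : ℕ} {D S : Finset V} : StallerWinSet G S → StallS G k D S
    | move {k : ℕ} {D S : Finset V} (v : V) : v ∉ D → v ∉ S →
        StallD G k D (insert v S) → StallS G (k + 1) D S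
end

/-- Dominator has a winning strategy in the D-game (Dominator starts). -/
def DominatorWinsD (G : SimpleGraph V) : Prop := ∃ k, DomD G k ∅ ∅

/-- Dominator has a winning strategy in the S-game (Staller starts). -/
def DominatorWinsS (G : SimpleGraph V) : Prop := ∃ k, DomS G k ∅ ∅

/-- Staller has a winning strategy in the D-game (Dominator starts). -/
def StallerWinsD (G : SimpleGraph V) : Prop := ∃ k, StallD G k ∅ ∅

/-- Staller has a winning strategy in the S-game (Staller starts). -/
def StallerWinsS (G : SimpleGraph V) : Prop := ∃ k, StallS G k ∅ ∅

/-- Outcome `𝒟`: Dominator wins both the D-game and the S-game. -/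
def outcomeD (G : SimpleGraph V) : Prop := DominatorWinsD G ∧ DominatorWinsS G

/-- Outcome `𝒮`: Staller wins both the D-game and the S-game. -/
def outcomeS (G : SimpleGraph V) : Prop := StallerWinsD G ∧ StallerWinsS G

/-- Outcome `𝒩`: the first player wins in both games. -/
def outcomeN (G : SimpleGraph V) : Prop := DominatorWinsD G ∧ StallerWinsS G

/-- `γ_MB(G)`: the minimum number of Dominator's moves needed to win the D-game,
`∞` if he has no winning strategy. -/
noncomputable def gMB (G : SimpleGraph V) : ℕ∞ :=
  sInf ((fun k : ℕ => (k : ℕ∞)) '' {k | DomD G k ∅ ∅})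

/-- `γ_MB'(G)`: the minimum number of Dominator's moves needed to win the S-game. -/
noncomputable def gMB' (G : SimpleGraph V) : ℕ∞ :=
  sInf ((fun k : ℕ => (k : ℕ∞)) '' {k | DomS G k ∅ ∅})

/-- `γ_SMB(G)`: the minimum number of Staller's moves needed to win the D-game. -/
noncomputable def gSMB (G : SimpleGraph V) : ℕ∞ :=
  sInf ((fun k : ℕ => (k : ℕ∞)) '' {k | StallD G k ∅ ∅})

/-- `γ_SMB'(G)`: the minimum number of Staller's moves needed to win the S-game. -/
noncomputable def gSMB' (G : SimpleGraph V) : ℕ∞ :=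
  sInf ((fun k : ℕ => (k : ℕ∞)) '' {k | StallS G k ∅ ∅})

end MBD

namespace MBD

variable {V : Type*} [DecidableEq V]

theorem domD_card {G : SimpleGraph V} :
    ∀ k (D S : Finset V), DomD G k D S →
      ∃ T : Finset V, Dominates G T ∧ T.card ≤ D.card + k := by
  intro k
  induction k using Nat.strong_induction_on with
  | _ k ih =>
    intro D S h
    cases h with
    | win h => exact ⟨D, h, by omega⟩
    | move v hvD hvS hS =>
      cases hS with
      | win h =>
        exact ⟨insert v D, h, le_trans (Finset.card_insert_le _ _) (by omega)⟩
      | move hex hresp =>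
        obtain ⟨u, huD, huS⟩ := hex
        obtain ⟨T, hT, hc⟩ := ih _ (by omega) _ _ (hresp u huD huS)
        refine ⟨T, hT, ?_⟩
        have := Finset.card_insert_le v D
        omega

end MBD
namespace MBD

variable {V : Type*} [DecidableEq V]

/-- Block-local stability: with Dominator set `D` and Staller set `S` inside block `B`,
Staller to move anywhere; Dominator can keep the block under control with `k` more moves. -/
inductive Loc (G : SimpleGraph V) (B : Finset V) : ℕ → Finset V → Finset V → Prop
  | good {k D S} : (∀ v ∈ B, ∃ d ∈ D, d = v ∨ G.Adj d v) → Loc G B k D S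
  | step {k D S} (r : V) (resp : V → V) (hrB : r ∈ B) (hrD : r ∉ D) (hrS : r ∉ S)
      (hpro : Loc G B k (insert r D) S)
      (hrespv : ∀ s, s ∈ B → s ∉ D → s ∉ S →
          resp s ∈ B ∧ resp s ∉ D ∧ resp s ∉ insert s S)
      (hresp : ∀ s, s ∈ B → s ∉ D → s ∉ S →
          Loc G B k (insert (resp s) D) (insert s S)) :
      Loc G B (k + 1) D S

theorem Loc.step' {G : SimpleGraph V} {B : Finset V} {k : ℕ} {D S : Finset V}
    (r : V) (hrB : r ∈ B) (hrD : r ∉ D) (hrS : r ∉ S)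
    (hpro : Loc G B k (insert r D) S)
    (hresp : ∀ s, s ∈ B → s ∉ D → s ∉ S → ∃ r', (r' ∈ B ∧ r' ∉ D ∧ r' ∉ insert s S) ∧
        Loc G B k (insert r' D) (insert s S)) :
    Loc G B (k + 1) D S := by
  classical
  refine Loc.step r
    (fun s => if h : ∃ r', (r' ∈ B ∧ r' ∉ D ∧ r' ∉ insert s S) ∧
        Loc G B k (insert r' D) (insert s S) then h.choose else r)
    hrB hrD hrS hpro ?_ ?_
  · intro s hsB hsD hsS
    have h := hresp s hsB hsD hsS
    rw [dif_pos h]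
    exact h.choose_spec.1
  · intro s hsB hsD hsS
    have h := hresp s hsB hsD hsS
    rw [dif_pos h]
    exact h.choose_spec.2

theorem Loc.resp_exists {G : SimpleGraph V} {B : Finset V} {k : ℕ} {D S : Finset V}
    (h : Loc G B (k + 1) D S)
    (hbad : ¬ ∀ v ∈ B, ∃ d ∈ D, d = v ∨ G.Adj d v) :
    (∃ r, r ∈ B ∧ r ∉ D ∧ r ∉ S ∧ Loc G B k (insert r D) S) ∧
    (∀ s, s ∈ B → s ∉ D → s ∉ S → ∃ r', (r' ∈ B ∧ r' ∉ D ∧ r' ∉ insert s S) ∧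
        Loc G B k (insert r' D) (insert s S)) := by
  cases h with
  | good hg => exact absurd hg hbad
  | step r resp hrB hrD hrS hpro hrespv hresp =>
    refine ⟨⟨r, hrB, hrD, hrS, hpro⟩, ?_⟩
    intro s hsB hsD hsS
    exact ⟨resp s, hrespv s hsB hsD hsS, hresp s hsB hsD hsS⟩

theorem comp_S {G : SimpleGraph V} {ι : Type*} [Fintype ι] [DecidableEq ι]
    (B : ι → Finset V) :
    ∀ (m : ℕ) (K : ι → ℕ) (DF : ι → Finset V) (D S : Finset V),
    m = ∑ i, K i →
    (∀ i j, i ≠ j → Disjoint (B i) (B j)) →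
    (∀ v : V, ∃ i, v ∈ B i) →
    (∀ i, DF i ⊆ B i) →
    (∀ v, v ∈ D ↔ ∃ i, v ∈ DF i) →
    (∀ i, Loc G (B i) (K i) (DF i) (S ∩ B i)) →
    DomS G m D S := by
  intro m
  induction m using Nat.strong_induction_on with
  | _ m ih =>
    intro K DF D S hm hdisj hcover hDsub hD hloc
    classical
    have memD : ∀ i, ∀ x ∈ DF i, x ∈ D := fun i x hx => (hD x).2 ⟨i, hx⟩
    have notD : ∀ i, ∀ x ∈ B i, x ∉ DF i → x ∉ D := by
      intro i x hxB hxDF hxD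
      obtain ⟨j, hj⟩ := (hD x).1 hxD
      by_cases hij : i = j
      · exact hxDF (hij ▸ hj)
      · exact (Finset.disjoint_left.mp (hdisj i j hij)) hxB (hDsub j hj)
    by_cases hall : ∀ i, ∀ v ∈ B i, ∃ d ∈ DF i, d = v ∨ G.Adj d v
    · refine DomS.win ?_
      intro v
      obtain ⟨i, hi⟩ := hcover v
      obtain ⟨d, hd, hdv⟩ := hall i v hi
      exact ⟨d, memD i d hd, hdv⟩
    · push_neg at hall
      obtain ⟨j, hbadj⟩ := hall
      have hbadj' : ¬ ∀ v ∈ B j, ∃ d ∈ DF j, d = v ∨ G.Adj d v := by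
        obtain ⟨vj, hvj, hng⟩ := hbadj
        intro hco
        obtain ⟨d, hd1, hd2⟩ := hco vj hvj
        rcases hd2 with h | h
        · exact (hng d hd1).1 h
        · exact (hng d hd1).2 h
      have hKjpos : ∃ kj, K j = kj + 1 := by
        have hne : K j ≠ 0 := by
          intro h0
          have hl := hloc j
          rw [h0] at hl
          cases hl with
          | good hg => exact hbadj' hg
        exact ⟨K j - 1, by omega⟩
      obtain ⟨kj, hKj⟩ := hKjpos
      have hlocj := hloc j
      rw [hKj] at hlocj
      obtain ⟨⟨rj, hrjB, hrjDF, hrjS, hproj⟩, hrespj⟩ := hlocj.resp_exists hbadj'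
      have hrjD : rj ∉ D := notD j rj hrjB hrjDF
      have hrjS' : rj ∉ S := fun h => hrjS (Finset.mem_inter.mpr ⟨h, hrjB⟩)
      refine DomS.move ⟨rj, hrjD, hrjS'⟩ ?_
      intro s hsD hsS
      obtain ⟨i, hsB⟩ := hcover s
      have hSint : ∀ l, s ∉ B l → (insert s S) ∩ B l = S ∩ B l := by
        intro l hl
        ext x
        simp only [Finset.mem_inter, Finset.mem_insert]
        constructor
        · rintro ⟨hx | hx, hxB⟩
          · exact absurd (hx ▸ hxB) hl
          · exact ⟨hx, hxB⟩
        · rintro ⟨hx, hxB⟩; exact ⟨Or.inr hx, hxB⟩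
      have hsum : ∀ (l : ι) (kl : ι → ℕ), K l = kl l + 1 →
          m - 1 = ∑ i, (Function.update K l (kl l)) i ∧ 1 ≤ m := by
        intro l kl hkl
        have h2 : ∑ x ∈ Finset.univ.erase l, K x + K l = ∑ i, K i :=
          Finset.sum_erase_add _ _ (Finset.mem_univ l)
        constructor
        · rw [Finset.sum_update_of_mem (Finset.mem_univ l), ← Finset.erase_eq]
          omega
        · omega
      by_cases hgoodi : ∀ v ∈ B i, ∃ d ∈ DF i, d = v ∨ G.Adj d v
      · -- Staller played in a good block; Dominator plays proactively in block j
        have hij : i ≠ j := by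
          rintro rfl; exact hbadj' hgoodi
        have hsBj : s ∉ B j := fun h =>
          (Finset.disjoint_left.mp (hdisj i j hij)) hsB h
        have hrjs : rj ∉ insert s S := by
          intro h
          rcases Finset.mem_insert.mp h with rfl | h
          · exact hsBj hrjB
          · exact hrjS' h
        obtain ⟨hsum1, hmpos⟩ := hsum j (fun _ => kj) hKj
        have hmm : m = (m - 1) + 1 := by omega
        rw [hmm]
        refine DomD.move rj hrjD hrjs ?_
        refine ih (m - 1) (by omega) (Function.update K j kj)
          (Function.update DF j (insert rj (DF j))) (insert rj D) (insert s S)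
          hsum1 hdisj hcover ?_ ?_ ?_
        · intro l
          rcases eq_or_ne l j with rfl | hlj
          · rw [Function.update_self]
            exact Finset.insert_subset hrjB (hDsub l)
          · rw [Function.update_of_ne hlj]; exact hDsub l
        · intro v
          simp only [Finset.mem_insert, hD]
          constructor
          · rintro (rfl | ⟨l, hl⟩)
            · exact ⟨j, by rw [Function.update_self]; exact Finset.mem_insert_self _ _⟩
            · rcases eq_or_ne l j with rfl | hlj
              · exact ⟨l, by rw [Function.update_self]; exact Finset.mem_insert_of_mem hl⟩
              · exact ⟨l, by rw [Function.update_of_ne hlj]; exact hl⟩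
          · rintro ⟨l, hl⟩
            rcases eq_or_ne l j with rfl | hlj
            · rw [Function.update_self, Finset.mem_insert] at hl
              rcases hl with rfl | hl
              · exact Or.inl rfl
              · exact Or.inr ⟨l, hl⟩
            · rw [Function.update_of_ne hlj] at hl
              exact Or.inr ⟨l, hl⟩
        · intro l
          rcases eq_or_ne l j with rfl | hlj
          · rw [Function.update_self, Function.update_self, hSint l hsBj]
            exact hproj
          · rw [Function.update_of_ne hlj, Function.update_of_ne hlj]
            by_cases hsBl : s ∈ B l
            · rcases eq_or_ne l i with rfl | hli
              · exact Loc.good hgoodi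
              · exact absurd hsB fun h =>
                  (Finset.disjoint_left.mp (hdisj l i hli)) hsBl h
            · rw [hSint l hsBl]; exact hloc l
      · -- block i is not good: use its response to s
        have hKipos : ∃ ki, K i = ki + 1 := by
          have hne : K i ≠ 0 := by
            intro h0
            have hl := hloc i
            rw [h0] at hl
            cases hl with
            | good hg => exact hgoodi hg
          exact ⟨K i - 1, by omega⟩
        obtain ⟨ki, hKi⟩ := hKipos
        have hloci := hloc i
        rw [hKi] at hloci
        obtain ⟨_, hrespi⟩ := hloci.resp_exists hgoodi
        have hsDF : s ∉ DF i := fun h => hsD (memD i s h)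
        have hsSB : s ∉ S ∩ B i := fun h => hsS (Finset.mem_inter.mp h).1
        obtain ⟨r', ⟨hr'B, hr'DF, hr'sS⟩, hr'loc⟩ := hrespi s hsB hsDF hsSB
        have hr'D : r' ∉ D := notD i r' hr'B hr'DF
        have hr'ne : r' ≠ s := fun h => hr'sS (h ▸ Finset.mem_insert_self _ _)
        have hr'S : r' ∉ S := fun h =>
          hr'sS (Finset.mem_insert_of_mem (Finset.mem_inter.mpr ⟨h, hr'B⟩))
        have hr's : r' ∉ insert s S := by
          intro h
          rcases Finset.mem_insert.mp h with h | h
          · exact hr'ne h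
          · exact hr'S h
        obtain ⟨hsum1, hmpos⟩ := hsum i (fun _ => ki) hKi
        have hmm : m = (m - 1) + 1 := by omega
        rw [hmm]
        refine DomD.move r' hr'D hr's ?_
        refine ih (m - 1) (by omega) (Function.update K i ki)
          (Function.update DF i (insert r' (DF i))) (insert r' D) (insert s S)
          hsum1 hdisj hcover ?_ ?_ ?_
        · intro l
          rcases eq_or_ne l i with rfl | hli
          · rw [Function.update_self]
            exact Finset.insert_subset hr'B (hDsub l)
          · rw [Function.update_of_ne hli]; exact hDsub l
        · intro v
          simp only [Finset.mem_insert, hD]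
          constructor
          · rintro (rfl | ⟨l, hl⟩)
            · exact ⟨i, by rw [Function.update_self]; exact Finset.mem_insert_self _ _⟩
            · rcases eq_or_ne l i with rfl | hli
              · exact ⟨l, by rw [Function.update_self]; exact Finset.mem_insert_of_mem hl⟩
              · exact ⟨l, by rw [Function.update_of_ne hli]; exact hl⟩
          · rintro ⟨l, hl⟩
            rcases eq_or_ne l i with rfl | hli
            · rw [Function.update_self, Finset.mem_insert] at hl
              rcases hl with rfl | hl
              · exact Or.inl rfl
              · exact Or.inr ⟨l, hl⟩
            · rw [Function.update_of_ne hli] at hl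
              exact Or.inr ⟨l, hl⟩
        · intro l
          rcases eq_or_ne l i with rfl | hli
          · rw [Function.update_self, Function.update_self]
            have heq : (insert s S) ∩ B l = insert s (S ∩ B l) := by
              ext x
              simp only [Finset.mem_inter, Finset.mem_insert]
              constructor
              · rintro ⟨rfl | hx, hxB⟩
                · exact Or.inl rfl
                · exact Or.inr ⟨hx, hxB⟩
              · rintro (rfl | ⟨hx, hxB⟩)
                · exact ⟨Or.inl rfl, hsB⟩
                · exact ⟨Or.inr hx, hxB⟩
            rw [heq]
            exact hr'loc
          · rw [Function.update_of_ne hli, Function.update_of_ne hli]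
            by_cases hsBl : s ∈ B l
            · exact absurd hsB fun h =>
                (Finset.disjoint_left.mp (hdisj l i hli)) hsBl h
            · rw [hSint l hsBl]; exact hloc l

end MBD
namespace MBD

/-- Strategy certificate tree for a block: `node p pc rs` says Dominator's proactive
move is `p` (with continuation `pc`), and for Staller's move `s` free, the entry
`(s, r, t)` in `rs` tells Dominator to respond `r` and continue with `t`. -/
inductive Cert where
  | leaf : Cert
  | node (p : ℕ) (pc : Cert) (rs : List (ℕ × ℕ × Cert)) : Cert

/-- Everything in the block is dominated by `D` (via closed-adjacency `adjB`). -/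
def allDom (bv : List ℕ) (adjB : ℕ → ℕ → Bool) (D : List ℕ) : Bool :=
  bv.all fun v => D.any fun d => adjB d v

/-- Certificate checker, fuel = number of remaining Dominator moves. -/
def chk (bv : List ℕ) (adjB : ℕ → ℕ → Bool) : ℕ → Cert → List ℕ → List ℕ → Bool
  | 0, _, D, _ => allDom bv adjB D
  | _ + 1, .leaf, D, _ => allDom bv adjB D
  | k + 1, .node p pc rs, D, S =>
    allDom bv adjB D ||
      ((bv.contains p && !D.contains p && !S.contains p && chk bv adjB k pc (p :: D) S)
        && (bv.all fun s => D.contains s || S.contains s || rs.any (fun e => e.1 == s))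
        && (rs.all fun e =>
             D.contains e.1 || S.contains e.1 ||
             (bv.contains e.2.1 && !D.contains e.2.1 && !S.contains e.2.1 && (e.2.1 != e.1)
               && chk bv adjB k e.2.2 (e.2.1 :: D) (e.1 :: S))))

variable {V : Type*} [DecidableEq V]

/-- Soundness of the certificate checker. -/
theorem chk_sound {G : SimpleGraph V} (bv : List ℕ) (adjB : ℕ → ℕ → Bool) (φ : ℕ → V)
    (hadj : ∀ i ∈ bv, ∀ j ∈ bv, adjB i j = true → (φ i = φ j ∨ G.Adj (φ i) (φ j)))
    (hinj : ∀ i ∈ bv, ∀ j ∈ bv, φ i = φ j → i = j) :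
    ∀ (k : ℕ) (t : Cert) (D S : List ℕ), (∀ x ∈ D, x ∈ bv) → (∀ x ∈ S, x ∈ bv) →
      chk bv adjB k t D S = true →
      Loc G (bv.map φ).toFinset k (D.map φ).toFinset (S.map φ).toFinset := by
  intro k
  induction k using Nat.strong_induction_on with
  | _ k ih =>
    intro t D S hDbv hSbv hchk
    have hgood : allDom bv adjB D = true →
        Loc G (bv.map φ).toFinset k (D.map φ).toFinset (S.map φ).toFinset := by
      intro had
      refine Loc.good ?_
      intro v hv
      rw [List.mem_toFinset, List.mem_map] at hv
      obtain ⟨i, hibv, rfl⟩ := hv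
      rw [allDom, List.all_eq_true] at had
      have h2 := had i hibv
      rw [List.any_eq_true] at h2
      obtain ⟨d, hdD, hdadj⟩ := h2
      refine ⟨φ d, ?_, ?_⟩
      · rw [List.mem_toFinset, List.mem_map]; exact ⟨d, hdD, rfl⟩
      · exact hadj d (hDbv d hdD) i hibv hdadj
    match k, ih, hchk with
    | 0, _, hchk => exact hgood (by rwa [chk] at hchk)
    | k' + 1, ih, hchk =>
      cases t with
      | leaf => exact hgood (by rwa [chk] at hchk)
      | node p pc rs =>
        rw [chk, Bool.or_eq_true] at hchk
        rcases hchk with had | hchk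
        · exact hgood had
        · simp only [Bool.and_eq_true] at hchk
          obtain ⟨⟨⟨⟨⟨hpbv, hpD⟩, hpS⟩, hpchk⟩, hkeys⟩, hrsl⟩ := hchk
          have hpbv' : p ∈ bv := by simpa using hpbv
          have hpD' : p ∉ D := by simpa using hpD
          have hpS' : p ∉ S := by simpa using hpS
          have notmemD : ∀ x, x ∈ bv → x ∉ D → φ x ∉ (D.map φ).toFinset := by
            intro x hx hxD hmem
            rw [List.mem_toFinset, List.mem_map] at hmem
            obtain ⟨y, hyD, hyx⟩ := hmem
            exact hxD (hinj y (hDbv y hyD) x hx hyx ▸ hyD)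
          have notmemS : ∀ x, x ∈ bv → x ∉ S → φ x ∉ (S.map φ).toFinset := by
            intro x hx hxS hmem
            rw [List.mem_toFinset, List.mem_map] at hmem
            obtain ⟨y, hyS, hyx⟩ := hmem
            exact hxS (hinj y (hSbv y hyS) x hx hyx ▸ hyS)
          refine Loc.step' (φ p) ?_ (notmemD p hpbv' hpD') (notmemS p hpbv' hpS') ?_ ?_
          · rw [List.mem_toFinset, List.mem_map]; exact ⟨p, hpbv', rfl⟩
          · have h3 := ih k' (by omega) pc (p :: D) S
              (by intro x hx; rcases hx with _ | hx; exact hpbv'; exact hDbv x (by assumption))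
              hSbv hpchk
            simpa using h3
          · intro s hsB hsD hsS
            rw [List.mem_toFinset, List.mem_map] at hsB
            obtain ⟨s₀, hs₀bv, rfl⟩ := hsB
            have hs₀D : s₀ ∉ D := fun h => hsD (by
              rw [List.mem_toFinset, List.mem_map]; exact ⟨s₀, h, rfl⟩)
            have hs₀S : s₀ ∉ S := fun h => hsS (by
              rw [List.mem_toFinset, List.mem_map]; exact ⟨s₀, h, rfl⟩)
            have hkey : ∃ e ∈ rs, e.1 = s₀ := by
              rw [List.all_eq_true] at hkeys
              have h4 := hkeys s₀ hs₀bv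
              simp only [Bool.or_eq_true] at h4
              rcases h4 with (h | h) | h
              · exact absurd (by simpa using h) hs₀D
              · exact absurd (by simpa using h) hs₀S
              · rw [List.any_eq_true] at h
                obtain ⟨e, he, hee⟩ := h
                exact ⟨e, he, by simpa using hee⟩
            obtain ⟨e, hers, he1⟩ := hkey
            rw [List.all_eq_true] at hrsl
            have h5 := hrsl e hers
            rw [he1] at h5
            simp only [Bool.or_eq_true] at h5
            rcases h5 with (h | h) | h
            · exact absurd (by simpa using h) hs₀D
            · exact absurd (by simpa using h) hs₀S
            · simp only [Bool.and_eq_true, bne_iff_ne, ne_eq] at h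
              obtain ⟨⟨⟨⟨hrbv, hrD⟩, hrS⟩, hrne⟩, hchk'⟩ := h
              have hrbv' : e.2.1 ∈ bv := by simpa using hrbv
              have hrD' : e.2.1 ∉ D := by simpa using hrD
              have hrS' : e.2.1 ∉ S := by simpa using hrS
              refine ⟨φ e.2.1, ⟨?_, notmemD _ hrbv' hrD', ?_⟩, ?_⟩
              · rw [List.mem_toFinset, List.mem_map]; exact ⟨e.2.1, hrbv', rfl⟩
              · intro hmem
                rcases Finset.mem_insert.mp hmem with h | h
                · exact hrne (hinj _ hrbv' s₀ hs₀bv h)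
                · exact notmemS _ hrbv' hrS' h
              · have h6 := ih k' (by omega) e.2.2 (e.2.1 :: D) (s₀ :: S)
                  (by intro x hx; rcases hx with _ | hx; exact hrbv'; exact hDbv x (by assumption))
                  (by intro x hx; rcases hx with _ | hx; exact hs₀bv; exact hSbv x (by assumption))
                  hchk'
                simpa using h6

end MBD
namespace MBD

/-- Local closed-adjacency of the `3 × w` grid on ids `m = 3*col + row`. -/
def locAdj (w : ℕ) (i j : ℕ) : Bool :=
  decide (i < 3*w) && decide (j < 3*w) &&
    ((i == j) ||
     ((i / 3 == j / 3) && (i % 3 + 1 == j % 3 || j % 3 + 1 == i % 3)) ||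
     ((i % 3 == j % 3) && (i / 3 + 1 == j / 3 || j / 3 + 1 == i / 3)))

def certW2 : Cert :=
(.node 5 .leaf [(1, 5, .leaf), (2, 5, .leaf), (3, 5, .leaf), (4, 5, .leaf), (5, 1, (.node 2 .leaf [(2, 4, .leaf), (3, 2, .leaf), (4, 2, .leaf)]))])
def certW3 : Cert :=
(.node 5 (.node 6 .leaf [(1, 6, .leaf), (2, 6, .leaf), (3, 6, .leaf), (4, 6, .leaf), (6, 7, .leaf), (7, 6, .leaf), (8, 6, .leaf)]) [(1, 5, (.node 6 .leaf [(2, 6, .leaf), (3, 6, .leaf), (4, 6, .leaf), (6, 7, .leaf), (7, 6, .leaf), (8, 6, .leaf)])), (2, 5, (.node 6 .leaf [(1, 6, .leaf), (3, 6, .leaf), (4, 6, .leaf), (6, 7, .leaf), (7, 6, .leaf), (8, 6, .leaf)])), (3, 5, (.node 6 .leaf [(1, 6, .leaf), (2, 6, .leaf), (4, 6, .leaf), (6, 7, .leaf), (7, 6, .leaf), (8, 6, .leaf)])), (4, 5, (.node 6 .leaf [(1, 6, .leaf), (2, 6, .leaf), (3, 6, .leaf), (6, 7, .leaf), (7, 6,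 .leaf), (8, 6, .leaf)])), (5, 7, (.node 2 .leaf [(1, 2, .leaf), (2, 1, (.node 4 .leaf [(3, 4, .leaf), (4, 8, .leaf), (6, 4, .leaf), (8, 4, .leaf)])), (3, 2, .leaf), (4, 2, .leaf), (6, 2, .leaf), (8, 2, .leaf)])), (6, 5, (.node 7 .leaf [(1, 7, .leaf), (2, 7, .leaf), (3, 7, .leaf), (4, 7, .leaf), (7, 3, (.node 4 .leaf [(1, 4, .leaf), (2, 4, .leaf), (4, 8, .leaf), (8, 4, .leaf)])), (8, 7, .leaf)])), (7, 5, (.node 6 .leaf [(1, 6, .leaf), (2, 6, .leaf), (3, 6, .leaf), (4, 6, .leaf), (6, 3, (.node 4 .leaf [(1, 4, .leaf), (2, 4, .leaf), (4, 8, .leaf), (8, 4, .leaf)])), (8, 6, .leaf)])), (8, 5, (.node 6 .leaf [(1, 6, .leaf), (2, 6, .leaf), (3, 6, .leaf), (4, 6, .leaf), (6, 7, .leaf), (7, 6, .leaf)]))])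
def certW4 : Cert :=
(.node 7 (.node 2 (.node 10 .leaf [(1, 10, .leaf), (3, 10, .leaf), (4, 10, .leaf), (5, 10, .leaf), (6, 10, .leaf), (8, 10, .leaf), (9, 10, .leaf), (10, 6, (.node 8 .leaf [(1, 8, .leaf), (3, 8, .leaf), (4, 8, .leaf), (5, 8, .leaf), (8, 11, .leaf), (9, 8, .leaf), (11, 8, .leaf)])), (11, 10, .leaf)]) [(1, 2, (.node 10 .leaf [(3, 10, .leaf), (4, 10, .leaf), (5, 10, .leaf), (6, 10, .leaf), (8, 10, .leaf), (9, 10, .leaf), (10, 6, (.node 8 .leaf [(3, 8, .leaf), (4, 8, .leaf), (5, 8, .leaf), (8, 11, .leaf), (9, 8, .leaf), (11, 8, .leaf)])), (11, 10, .leaf)])), (2, 5, (.node 10 .leaf [(1, 10, .leaf), (3, 10, .leaf), (4, 10, .leaf), (6, 10, .leaf), (8, 10, .leaf), (9, 10, .leaf), (10, 6, (.node 8 .leaf [(1, 8, .leaf), (3, 8, .leaf), (4, 8, .leaf), (8, 11, .leaf), (9, 8, .leaf), (11, 8, .leaf)])), (11, 10, .leaf)])), (3, 2, (.node 10 .leaf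 [(1, 10, .leaf), (4, 10, .leaf), (5, 10, .leaf), (6, 10, .leaf), (8, 10, .leaf), (9, 10, .leaf), (10, 6, (.node 8 .leaf [(1, 8, .leaf), (4, 8, .leaf), (5, 8, .leaf), (8, 11, .leaf), (9, 8, .leaf), (11, 8, .leaf)])), (11, 10, .leaf)])), (4, 2, (.node 10 .leaf [(1, 10, .leaf), (3, 10, .leaf), (5, 10, .leaf), (6, 10, .leaf), (8, 10, .leaf), (9, 10, .leaf), (10, 6, (.node 8 .leaf [(1, 8, .leaf), (3, 8, .leaf), (5, 8, .leaf), (8, 11, .leaf), (9, 8, .leaf), (11, 8, .leaf)])), (11, 10, .leaf)])), (5, 2, (.node 10 .leaf [(1, 10, .leaf), (3, 10, .leaf), (4, 10, .leaf), (6, 10, .leaf), (8, 10, .leaf), (9, 10, .leaf), (10, 6, (.node 8 .leaf [(1, 8, .leaf), (3, 8, .leaf), (4, 8, .leaf), (8, 11, .leaf), (9, 8, .leaf), (11, 8, .leaf)])), (11, 10, .leaf)])), (6, 2, (.node 10 .leaf [(1, 10, .leaf), (3, 10, .leaf), (4, 10, .leaf), (5, 10, .leaf), (8, 10, .leaf),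 (9, 10, .leaf), (10, 9, (.node 8 .leaf [(1, 8, .leaf), (3, 8, .leaf), (4, 8, .leaf), (5, 8, .leaf), (8, 11, .leaf), (11, 8, .leaf)])), (11, 10, .leaf)])), (8, 2, (.node 10 .leaf [(1, 10, .leaf), (3, 10, .leaf), (4, 10, .leaf), (5, 10, .leaf), (6, 10, .leaf), (9, 10, .leaf), (10, 11, (.node 6 .leaf [(1, 6, .leaf), (3, 6, .leaf), (4, 6, .leaf), (5, 6, .leaf), (6, 9, .leaf), (9, 6, .leaf)])), (11, 10, .leaf)])), (9, 2, (.node 10 .leaf [(1, 10, .leaf), (3, 10, .leaf), (4, 10, .leaf), (5, 10, .leaf), (6, 10, .leaf), (8, 10, .leaf), (10, 6, (.node 8 .leaf [(1, 8, .leaf), (3, 8, .leaf), (4, 8, .leaf), (5, 8, .leaf), (8, 11, .leaf), (11, 8, .leaf)])), (11, 10, .leaf)])), (10, 2, (.node 6 (.node 8 .leaf [(1, 8, .leaf), (3, 8, .leaf), (4, 8, .leaf), (5, 8, .leaf), (8, 11, .leaf), (9, 8, .leaf), (11, 8, .leaf)]) [(1, 6, (.node 8 .leaf [(3, 8, .leaf),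 (4, 8, .leaf), (5, 8, .leaf), (8, 11, .leaf), (9, 8, .leaf), (11, 8, .leaf)])), (3, 6, (.node 8 .leaf [(1, 8, .leaf), (4, 8, .leaf), (5, 8, .leaf), (8, 11, .leaf), (9, 8, .leaf), (11, 8, .leaf)])), (4, 6, (.node 8 .leaf [(1, 8, .leaf), (3, 8, .leaf), (5, 8, .leaf), (8, 11, .leaf), (9, 8, .leaf), (11, 8, .leaf)])), (5, 6, (.node 8 .leaf [(1, 8, .leaf), (3, 8, .leaf), (4, 8, .leaf), (8, 11, .leaf), (9, 8, .leaf), (11, 8, .leaf)])), (6, 9, (.node 8 .leaf [(1, 8, .leaf), (3, 8, .leaf), (4, 8, .leaf), (5, 8, .leaf), (8, 11, .leaf), (11, 8, .leaf)])), (8, 11, (.node 6 .leaf [(1, 6, .leaf), (3, 6, .leaf), (4, 6, .leaf), (5, 6, .leaf), (6, 9, .leaf), (9, 6, .leaf)])), (9, 6, (.node 8 .leaf [(1, 8, .leaf), (3, 8, .leaf), (4, 8, .leaf), (5, 8, .leaf), (8, 11, .leaf), (11, 8, .leaf)])), (11, 8, (.node 6 .leaf [(1, 6, .leaf), (3, 6,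 .leaf), (4, 6, .leaf), (5, 6, .leaf), (6, 9, .leaf), (9, 6, .leaf)]))])), (11, 2, (.node 10 .leaf [(1, 10, .leaf), (3, 10, .leaf), (4, 10, .leaf), (5, 10, .leaf), (6, 10, .leaf), (8, 10, .leaf), (9, 10, .leaf), (10, 8, (.node 6 .leaf [(1, 6, .leaf), (3, 6, .leaf), (4, 6, .leaf), (5, 6, .leaf), (6, 9, .leaf), (9, 6, .leaf)]))]))]) [(1, 7, (.node 2 (.node 10 .leaf [(3, 10, .leaf), (4, 10, .leaf), (5, 10, .leaf), (6, 10, .leaf), (8, 10, .leaf), (9, 10, .leaf), (10, 6, (.node 8 .leaf [(3, 8, .leaf), (4, 8, .leaf), (5, 8, .leaf), (8, 11, .leaf), (9, 8, .leaf), (11, 8, .leaf)])), (11, 10, .leaf)]) [(2, 5, (.node 10 .leaf [(3, 10, .leaf), (4, 10, .leaf), (6, 10, .leaf), (8, 10, .leaf), (9, 10, .leaf), (10, 6, (.node 8 .leaf [(3, 8, .leaf), (4, 8, .leaf), (8, 11, .leaf), (9, 8, .leaf), (11, 8, .leaf)])), (11, 10, .leaf)])), (3, 2, (.node 10 .leaf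 [(4, 10, .leaf), (5, 10, .leaf), (6, 10, .leaf), (8, 10, .leaf), (9, 10, .leaf), (10, 6, (.node 8 .leaf [(4, 8, .leaf), (5, 8, .leaf), (8, 11, .leaf), (9, 8, .leaf), (11, 8, .leaf)])), (11, 10, .leaf)])), (4, 2, (.node 10 .leaf [(3, 10, .leaf), (5, 10, .leaf), (6, 10, .leaf), (8, 10, .leaf), (9, 10, .leaf), (10, 6, (.node 8 .leaf [(3, 8, .leaf), (5, 8, .leaf), (8, 11, .leaf), (9, 8, .leaf), (11, 8, .leaf)])), (11, 10, .leaf)])), (5, 2, (.node 10 .leaf [(3, 10, .leaf), (4, 10, .leaf), (6, 10, .leaf), (8, 10, .leaf), (9, 10, .leaf), (10, 6, (.node 8 .leaf [(3, 8, .leaf), (4, 8, .leaf), (8, 11, .leaf), (9, 8, .leaf), (11, 8, .leaf)])), (11, 10, .leaf)])), (6, 2, (.node 10 .leaf [(3, 10, .leaf), (4, 10, .leaf), (5, 10, .leaf), (8, 10, .leaf), (9, 10, .leaf), (10, 9, (.node 8 .leaf [(3, 8, .leaf), (4, 8, .leaf), (5, 8, .leaf), (8, 11, .leaf), (11, 8,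 .leaf)])), (11, 10, .leaf)])), (8, 2, (.node 10 .leaf [(3, 10, .leaf), (4, 10, .leaf), (5, 10, .leaf), (6, 10, .leaf), (9, 10, .leaf), (10, 11, (.node 6 .leaf [(3, 6, .leaf), (4, 6, .leaf), (5, 6, .leaf), (6, 9, .leaf), (9, 6, .leaf)])), (11, 10, .leaf)])), (9, 2, (.node 10 .leaf [(3, 10, .leaf), (4, 10, .leaf), (5, 10, .leaf), (6, 10, .leaf), (8, 10, .leaf), (10, 6, (.node 8 .leaf [(3, 8, .leaf), (4, 8, .leaf), (5, 8, .leaf), (8, 11, .leaf), (11, 8, .leaf)])), (11, 10, .leaf)])), (10, 2, (.node 6 (.node 8 .leaf [(3, 8, .leaf), (4, 8, .leaf), (5, 8, .leaf), (8, 11, .leaf), (9, 8, .leaf), (11, 8, .leaf)]) [(3, 6, (.node 8 .leaf [(4, 8, .leaf), (5, 8, .leaf), (8, 11, .leaf), (9, 8, .leaf), (11, 8, .leaf)])), (4, 6, (.node 8 .leaf [(3, 8, .leaf), (5, 8, .leaf), (8, 11, .leaf), (9, 8, .leaf), (11, 8, .leaf)])), (5, 6, (.node 8 .leaf [(3, 8,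 .leaf), (4, 8, .leaf), (8, 11, .leaf), (9, 8, .leaf), (11, 8, .leaf)])), (6, 9, (.node 8 .leaf [(3, 8, .leaf), (4, 8, .leaf), (5, 8, .leaf), (8, 11, .leaf), (11, 8, .leaf)])), (8, 11, (.node 6 .leaf [(3, 6, .leaf), (4, 6, .leaf), (5, 6, .leaf), (6, 9, .leaf), (9, 6, .leaf)])), (9, 6, (.node 8 .leaf [(3, 8, .leaf), (4, 8, .leaf), (5, 8, .leaf), (8, 11, .leaf), (11, 8, .leaf)])), (11, 8, (.node 6 .leaf [(3, 6, .leaf), (4, 6, .leaf), (5, 6, .leaf), (6, 9, .leaf), (9, 6, .leaf)]))])), (11, 2, (.node 10 .leaf [(3, 10, .leaf), (4, 10, .leaf), (5, 10, .leaf), (6, 10, .leaf), (8, 10, .leaf), (9, 10, .leaf), (10, 8, (.node 6 .leaf [(3, 6, .leaf), (4, 6, .leaf), (5, 6, .leaf), (6, 9, .leaf), (9, 6, .leaf)]))]))])), (2, 5, (.node 10 (.node 3 .leaf [(1, 3, .leaf), (3, 6, .leaf), (4, 3, .leaf), (6, 3, .leaf), (7, 3, .leaf), (8, 3, .leaf),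 (9, 3, .leaf), (11, 3, .leaf)]) [(1, 10, (.node 3 .leaf [(3, 6, .leaf), (4, 3, .leaf), (6, 3, .leaf), (7, 3, .leaf), (8, 3, .leaf), (9, 3, .leaf), (11, 3, .leaf)])), (3, 10, (.node 6 .leaf [(1, 6, .leaf), (4, 6, .leaf), (6, 7, .leaf), (7, 6, .leaf), (8, 6, .leaf), (9, 6, .leaf), (11, 6, .leaf)])), (4, 10, (.node 3 .leaf [(1, 3, .leaf), (3, 6, .leaf), (6, 3, .leaf), (7, 3, .leaf), (8, 3, .leaf), (9, 3, .leaf), (11, 3, .leaf)])), (6, 10, (.node 3 .leaf [(1, 3, .leaf), (3, 7, .leaf), (4, 3, .leaf), (7, 3, .leaf), (8, 3, .leaf), (9, 3, .leaf), (11, 3, .leaf)])), (7, 10, (.node 3 .leaf [(1, 3, .leaf), (3, 6, .leaf), (4, 3, .leaf), (6, 3, .leaf), (8, 3, .leaf), (9, 3, .leaf), (11, 3, .leaf)])), (8, 10, (.node 3 .leaf [(1, 3, .leaf), (3, 6, .leaf), (4, 3, .leaf), (6, 3, .leaf), (7, 3, .leaf), (9, 3, .leaf), (11, 3, .leaf)])),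 (9, 10, (.node 3 .leaf [(1, 3, .leaf), (3, 6, .leaf), (4, 3, .leaf), (6, 3, .leaf), (7, 3, .leaf), (8, 3, .leaf), (11, 3, .leaf)])), (10, 6, (.node 11 .leaf [(1, 11, .leaf), (3, 11, .leaf), (4, 11, .leaf), (7, 11, .leaf), (8, 11, .leaf), (9, 11, .leaf), (11, 8, (.node 7 .leaf [(1, 7, .leaf), (3, 7, .leaf), (4, 7, .leaf), (7, 9, .leaf), (9, 7, .leaf)]))])), (11, 10, (.node 3 .leaf [(1, 3, .leaf), (3, 6, .leaf), (4, 3, .leaf), (6, 3, .leaf), (7, 3, .leaf), (8, 3, .leaf), (9, 3, .leaf)]))])), (3, 7, (.node 2 (.node 10 .leaf [(1, 10, .leaf), (4, 10, .leaf), (5, 10, .leaf), (6, 10, .leaf), (8, 10, .leaf), (9, 10, .leaf), (10, 6, (.node 8 .leaf [(1, 8, .leaf), (4, 8, .leaf), (5, 8, .leaf), (8, 11, .leaf), (9, 8, .leaf), (11, 8, .leaf)])), (11, 10, .leaf)]) [(1, 2, (.node 10 .leaf [(4, 10, .leaf), (5, 10, .leaf), (6, 10, .leaf), (8, 10, .leaf),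 (9, 10, .leaf), (10, 6, (.node 8 .leaf [(4, 8, .leaf), (5, 8, .leaf), (8, 11, .leaf), (9, 8, .leaf), (11, 8, .leaf)])), (11, 10, .leaf)])), (2, 5, (.node 10 .leaf [(1, 10, .leaf), (4, 10, .leaf), (6, 10, .leaf), (8, 10, .leaf), (9, 10, .leaf), (10, 6, (.node 8 .leaf [(1, 8, .leaf), (4, 8, .leaf), (8, 11, .leaf), (9, 8, .leaf), (11, 8, .leaf)])), (11, 10, .leaf)])), (4, 2, (.node 10 .leaf [(1, 10, .leaf), (5, 10, .leaf), (6, 10, .leaf), (8, 10, .leaf), (9, 10, .leaf), (10, 6, (.node 8 .leaf [(1, 8, .leaf), (5, 8, .leaf), (8, 11, .leaf), (9, 8, .leaf), (11, 8, .leaf)])), (11, 10, .leaf)])), (5, 2, (.node 10 .leaf [(1, 10, .leaf), (4, 10, .leaf), (6, 10, .leaf), (8, 10, .leaf), (9, 10, .leaf), (10, 6, (.node 8 .leaf [(1, 8, .leaf), (4, 8, .leaf), (8, 11, .leaf), (9, 8, .leaf), (11, 8, .leaf)])), (11, 10, .leaf)])), (6, 2, (.node 10 .leaf [(1, 10, .leaf),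 (4, 10, .leaf), (5, 10, .leaf), (8, 10, .leaf), (9, 10, .leaf), (10, 9, (.node 8 .leaf [(1, 8, .leaf), (4, 8, .leaf), (5, 8, .leaf), (8, 11, .leaf), (11, 8, .leaf)])), (11, 10, .leaf)])), (8, 2, (.node 10 .leaf [(1, 10, .leaf), (4, 10, .leaf), (5, 10, .leaf), (6, 10, .leaf), (9, 10, .leaf), (10, 11, (.node 6 .leaf [(1, 6, .leaf), (4, 6, .leaf), (5, 6, .leaf), (6, 9, .leaf), (9, 6, .leaf)])), (11, 10, .leaf)])), (9, 2, (.node 10 .leaf [(1, 10, .leaf), (4, 10, .leaf), (5, 10, .leaf), (6, 10, .leaf), (8, 10, .leaf), (10, 6, (.node 8 .leaf [(1, 8, .leaf), (4, 8, .leaf), (5, 8, .leaf), (8, 11, .leaf), (11, 8, .leaf)])), (11, 10, .leaf)])), (10, 2, (.node 6 (.node 8 .leaf [(1, 8, .leaf), (4, 8, .leaf), (5, 8, .leaf), (8, 11, .leaf), (9, 8, .leaf), (11, 8, .leaf)]) [(1, 6, (.node 8 .leaf [(4, 8, .leaf), (5, 8, .leaf), (8, 11, .leaf), (9, 8, .leaf),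 (11, 8, .leaf)])), (4, 6, (.node 8 .leaf [(1, 8, .leaf), (5, 8, .leaf), (8, 11, .leaf), (9, 8, .leaf), (11, 8, .leaf)])), (5, 6, (.node 8 .leaf [(1, 8, .leaf), (4, 8, .leaf), (8, 11, .leaf), (9, 8, .leaf), (11, 8, .leaf)])), (6, 9, (.node 8 .leaf [(1, 8, .leaf), (4, 8, .leaf), (5, 8, .leaf), (8, 11, .leaf), (11, 8, .leaf)])), (8, 11, (.node 6 .leaf [(1, 6, .leaf), (4, 6, .leaf), (5, 6, .leaf), (6, 9, .leaf), (9, 6, .leaf)])), (9, 6, (.node 8 .leaf [(1, 8, .leaf), (4, 8, .leaf), (5, 8, .leaf), (8, 11, .leaf), (11, 8, .leaf)])), (11, 8, (.node 6 .leaf [(1, 6, .leaf), (4, 6, .leaf), (5, 6, .leaf), (6, 9, .leaf), (9, 6, .leaf)]))])), (11, 2, (.node 10 .leaf [(1, 10, .leaf), (4, 10, .leaf), (5, 10, .leaf), (6, 10, .leaf), (8, 10, .leaf), (9, 10, .leaf), (10, 8, (.node 6 .leaf [(1, 6, .leaf), (4, 6, .leaf), (5, 6, .leaf), (6, 9, .leaf),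 (9, 6, .leaf)]))]))])), (4, 7, (.node 2 (.node 10 .leaf [(1, 10, .leaf), (3, 10, .leaf), (5, 10, .leaf), (6, 10, .leaf), (8, 10, .leaf), (9, 10, .leaf), (10, 6, (.node 8 .leaf [(1, 8, .leaf), (3, 8, .leaf), (5, 8, .leaf), (8, 11, .leaf), (9, 8, .leaf), (11, 8, .leaf)])), (11, 10, .leaf)]) [(1, 2, (.node 10 .leaf [(3, 10, .leaf), (5, 10, .leaf), (6, 10, .leaf), (8, 10, .leaf), (9, 10, .leaf), (10, 6, (.node 8 .leaf [(3, 8, .leaf), (5, 8, .leaf), (8, 11, .leaf), (9, 8, .leaf), (11, 8, .leaf)])), (11, 10, .leaf)])), (2, 5, (.node 10 .leaf [(1, 10, .leaf), (3, 10, .leaf), (6, 10, .leaf), (8, 10, .leaf), (9, 10, .leaf), (10, 6, (.node 8 .leaf [(1, 8, .leaf), (3, 8, .leaf), (8, 11, .leaf), (9, 8, .leaf), (11, 8, .leaf)])), (11, 10, .leaf)])), (3, 2, (.node 10 .leaf [(1, 10, .leaf), (5, 10, .leaf), (6, 10, .leaf), (8, 10, .leaf), (9, 10, .leaf), (10, 6,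 (.node 8 .leaf [(1, 8, .leaf), (5, 8, .leaf), (8, 11, .leaf), (9, 8, .leaf), (11, 8, .leaf)])), (11, 10, .leaf)])), (5, 2, (.node 10 .leaf [(1, 10, .leaf), (3, 10, .leaf), (6, 10, .leaf), (8, 10, .leaf), (9, 10, .leaf), (10, 6, (.node 8 .leaf [(1, 8, .leaf), (3, 8, .leaf), (8, 11, .leaf), (9, 8, .leaf), (11, 8, .leaf)])), (11, 10, .leaf)])), (6, 2, (.node 10 .leaf [(1, 10, .leaf), (3, 10, .leaf), (5, 10, .leaf), (8, 10, .leaf), (9, 10, .leaf), (10, 9, (.node 8 .leaf [(1, 8, .leaf), (3, 8, .leaf), (5, 8, .leaf), (8, 11, .leaf), (11, 8, .leaf)])), (11, 10, .leaf)])), (8, 2, (.node 10 .leaf [(1, 10, .leaf), (3, 10, .leaf), (5, 10, .leaf), (6, 10, .leaf), (9, 10, .leaf), (10, 11, (.node 6 .leaf [(1, 6, .leaf), (3, 6, .leaf), (5, 6, .leaf), (6, 9, .leaf), (9, 6, .leaf)])), (11, 10, .leaf)])), (9, 2, (.node 10 .leaf [(1, 10, .leaf), (3, 10, .leaf), (5,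 10, .leaf), (6, 10, .leaf), (8, 10, .leaf), (10, 6, (.node 8 .leaf [(1, 8, .leaf), (3, 8, .leaf), (5, 8, .leaf), (8, 11, .leaf), (11, 8, .leaf)])), (11, 10, .leaf)])), (10, 2, (.node 6 (.node 8 .leaf [(1, 8, .leaf), (3, 8, .leaf), (5, 8, .leaf), (8, 11, .leaf), (9, 8, .leaf), (11, 8, .leaf)]) [(1, 6, (.node 8 .leaf [(3, 8, .leaf), (5, 8, .leaf), (8, 11, .leaf), (9, 8, .leaf), (11, 8, .leaf)])), (3, 6, (.node 8 .leaf [(1, 8, .leaf), (5, 8, .leaf), (8, 11, .leaf), (9, 8, .leaf), (11, 8, .leaf)])), (5, 6, (.node 8 .leaf [(1, 8, .leaf), (3, 8, .leaf), (8, 11, .leaf), (9, 8, .leaf), (11, 8, .leaf)])), (6, 9, (.node 8 .leaf [(1, 8, .leaf), (3, 8, .leaf), (5, 8, .leaf), (8, 11, .leaf), (11, 8, .leaf)])), (8, 11, (.node 6 .leaf [(1, 6, .leaf), (3, 6, .leaf), (5, 6, .leaf), (6, 9, .leaf), (9, 6, .leaf)])), (9, 6, (.node 8 .leaf [(1, 8,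 .leaf), (3, 8, .leaf), (5, 8, .leaf), (8, 11, .leaf), (11, 8, .leaf)])), (11, 8, (.node 6 .leaf [(1, 6, .leaf), (3, 6, .leaf), (5, 6, .leaf), (6, 9, .leaf), (9, 6, .leaf)]))])), (11, 2, (.node 10 .leaf [(1, 10, .leaf), (3, 10, .leaf), (5, 10, .leaf), (6, 10, .leaf), (8, 10, .leaf), (9, 10, .leaf), (10, 8, (.node 6 .leaf [(1, 6, .leaf), (3, 6, .leaf), (5, 6, .leaf), (6, 9, .leaf), (9, 6, .leaf)]))]))])), (5, 8, (.node 7 (.node 1 (.node 6 .leaf [(2, 6, .leaf), (3, 6, .leaf), (4, 6, .leaf), (6, 9, .leaf), (9, 6, .leaf), (10, 6, .leaf), (11, 6, .leaf)]) [(1, 2, (.node 6 .leaf [(3, 6, .leaf), (4, 6, .leaf), (6, 9, .leaf), (9, 6, .leaf), (10, 6, .leaf), (11, 6, .leaf)])), (2, 1, (.node 6 .leaf [(3, 6, .leaf), (4, 6, .leaf), (6, 9, .leaf), (9, 6, .leaf), (10, 6, .leaf), (11, 6, .leaf)])), (3, 1, (.node 6 .leaf [(2, 6, .leaf), (4, 6,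 .leaf), (6, 9, .leaf), (9, 6, .leaf), (10, 6, .leaf), (11, 6, .leaf)])), (4, 1, (.node 6 .leaf [(2, 6, .leaf), (3, 6, .leaf), (6, 9, .leaf), (9, 6, .leaf), (10, 6, .leaf), (11, 6, .leaf)])), (6, 1, (.node 9 .leaf [(2, 9, .leaf), (3, 9, .leaf), (4, 9, .leaf), (9, 10, .leaf), (10, 9, .leaf), (11, 9, .leaf)])), (9, 1, (.node 6 .leaf [(2, 6, .leaf), (3, 6, .leaf), (4, 6, .leaf), (6, 10, .leaf), (10, 6, .leaf), (11, 6, .leaf)])), (10, 1, (.node 6 .leaf [(2, 6, .leaf), (3, 6, .leaf), (4, 6, .leaf), (6, 9, .leaf), (9, 6, .leaf), (11, 6, .leaf)])), (11, 1, (.node 6 .leaf [(2, 6, .leaf), (3, 6, .leaf), (4, 6, .leaf), (6, 9, .leaf), (9, 6, .leaf), (10, 6, .leaf)]))]) [(1, 2, (.node 7 (.node 6 .leaf [(3, 6, .leaf), (4, 6, .leaf), (6, 9, .leaf), (9, 6, .leaf), (10, 6, .leaf), (11, 6, .leaf)]) [(3, 7, (.node 6 .leaf [(4, 6, .leaf),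 (6, 9, .leaf), (9, 6, .leaf), (10, 6, .leaf), (11, 6, .leaf)])), (4, 7, (.node 6 .leaf [(3, 6, .leaf), (6, 9, .leaf), (9, 6, .leaf), (10, 6, .leaf), (11, 6, .leaf)])), (6, 7, (.node 9 .leaf [(3, 9, .leaf), (4, 9, .leaf), (9, 10, .leaf), (10, 9, .leaf), (11, 9, .leaf)])), (7, 9, (.node 3 .leaf [(3, 4, .leaf), (4, 3, .leaf), (6, 3, .leaf), (10, 3, .leaf), (11, 3, .leaf)])), (9, 7, (.node 6 .leaf [(3, 6, .leaf), (4, 6, .leaf), (6, 10, .leaf), (10, 6, .leaf), (11, 6, .leaf)])), (10, 7, (.node 6 .leaf [(3, 6, .leaf), (4, 6, .leaf), (6, 9, .leaf), (9, 6, .leaf), (11, 6, .leaf)])), (11, 7, (.node 6 .leaf [(3, 6, .leaf), (4, 6, .leaf), (6, 9, .leaf), (9, 6, .leaf), (10, 6, .leaf)]))])), (2, 1, (.node 9 .leaf [(3, 9, .leaf), (4, 9, .leaf), (6, 9, .leaf), (7, 9, .leaf), (9, 6, (.node 7 .leaf [(3, 7, .leaf), (4, 7, .leaf), (7, 10, .leaf),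 (10, 7, .leaf), (11, 7, .leaf)])), (10, 9, .leaf), (11, 9, .leaf)])), (3, 7, (.node 1 (.node 6 .leaf [(2, 6, .leaf), (4, 6, .leaf), (6, 9, .leaf), (9, 6, .leaf), (10, 6, .leaf), (11, 6, .leaf)]) [(1, 2, (.node 6 .leaf [(4, 6, .leaf), (6, 9, .leaf), (9, 6, .leaf), (10, 6, .leaf), (11, 6, .leaf)])), (2, 1, (.node 6 .leaf [(4, 6, .leaf), (6, 9, .leaf), (9, 6, .leaf), (10, 6, .leaf), (11, 6, .leaf)])), (4, 1, (.node 6 .leaf [(2, 6, .leaf), (6, 9, .leaf), (9, 6, .leaf), (10, 6, .leaf), (11, 6, .leaf)])), (6, 1, (.node 9 .leaf [(2, 9, .leaf), (4, 9, .leaf), (9, 10, .leaf), (10, 9, .leaf), (11, 9, .leaf)])), (9, 1, (.node 6 .leaf [(2, 6, .leaf), (4, 6, .leaf), (6, 10, .leaf), (10, 6, .leaf), (11, 6, .leaf)])), (10, 1, (.node 6 .leaf [(2, 6, .leaf), (4, 6, .leaf), (6, 9, .leaf), (9, 6, .leaf), (11, 6, .leaf)])), (11, 1, (.node 6 .leaf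 [(2, 6, .leaf), (4, 6, .leaf), (6, 9, .leaf), (9, 6, .leaf), (10, 6, .leaf)]))])), (4, 7, (.node 1 (.node 6 .leaf [(2, 6, .leaf), (3, 6, .leaf), (6, 9, .leaf), (9, 6, .leaf), (10, 6, .leaf), (11, 6, .leaf)]) [(1, 2, (.node 6 .leaf [(3, 6, .leaf), (6, 9, .leaf), (9, 6, .leaf), (10, 6, .leaf), (11, 6, .leaf)])), (2, 1, (.node 6 .leaf [(3, 6, .leaf), (6, 9, .leaf), (9, 6, .leaf), (10, 6, .leaf), (11, 6, .leaf)])), (3, 1, (.node 6 .leaf [(2, 6, .leaf), (6, 9, .leaf), (9, 6, .leaf), (10, 6, .leaf), (11, 6, .leaf)])), (6, 1, (.node 9 .leaf [(2, 9, .leaf), (3, 9, .leaf), (9, 10, .leaf), (10, 9, .leaf), (11, 9, .leaf)])), (9, 1, (.node 6 .leaf [(2, 6, .leaf), (3, 6, .leaf), (6, 10, .leaf), (10, 6, .leaf), (11, 6, .leaf)])), (10, 1, (.node 6 .leaf [(2, 6, .leaf), (3, 6, .leaf), (6, 9, .leaf), (9, 6, .leaf), (11, 6, .leaf)])), (11,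 1, (.node 6 .leaf [(2, 6, .leaf), (3, 6, .leaf), (6, 9, .leaf), (9, 6, .leaf), (10, 6, .leaf)]))])), (6, 7, (.node 1 (.node 9 .leaf [(2, 9, .leaf), (3, 9, .leaf), (4, 9, .leaf), (9, 10, .leaf), (10, 9, .leaf), (11, 9, .leaf)]) [(1, 2, (.node 9 .leaf [(3, 9, .leaf), (4, 9, .leaf), (9, 10, .leaf), (10, 9, .leaf), (11, 9, .leaf)])), (2, 1, (.node 9 .leaf [(3, 9, .leaf), (4, 9, .leaf), (9, 10, .leaf), (10, 9, .leaf), (11, 9, .leaf)])), (3, 1, (.node 9 .leaf [(2, 9, .leaf), (4, 9, .leaf), (9, 10, .leaf), (10, 9, .leaf), (11, 9, .leaf)])), (4, 1, (.node 9 .leaf [(2, 9, .leaf), (3, 9, .leaf), (9, 10, .leaf), (10, 9, .leaf), (11, 9, .leaf)])), (9, 10, (.node 1 .leaf [(1, 2, .leaf), (2, 1, .leaf), (3, 1, .leaf), (4, 1, .leaf), (11, 1, .leaf)])), (10, 9, (.node 1 .leaf [(1, 2, .leaf), (2, 1, .leaf), (3, 1, .leaf), (4, 1, .leaf), (11, 1,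 .leaf)])), (11, 1, (.node 9 .leaf [(2, 9, .leaf), (3, 9, .leaf), (4, 9, .leaf), (9, 10, .leaf), (10, 9, .leaf)]))])), (7, 9, (.node 1 .leaf [(1, 2, (.node 3 .leaf [(3, 4, .leaf), (4, 3, .leaf), (6, 3, .leaf), (10, 3, .leaf), (11, 3, .leaf)])), (2, 1, .leaf), (3, 1, .leaf), (4, 1, .leaf), (6, 1, .leaf), (10, 1, .leaf), (11, 1, .leaf)])), (9, 7, (.node 1 (.node 6 .leaf [(2, 6, .leaf), (3, 6, .leaf), (4, 6, .leaf), (6, 10, .leaf), (10, 6, .leaf), (11, 6, .leaf)]) [(1, 2, (.node 6 .leaf [(3, 6, .leaf), (4, 6, .leaf), (6, 10, .leaf), (10, 6, .leaf), (11, 6, .leaf)])), (2, 1, (.node 6 .leaf [(3, 6, .leaf), (4, 6, .leaf), (6, 10, .leaf), (10, 6, .leaf), (11, 6, .leaf)])), (3, 1, (.node 6 .leaf [(2, 6, .leaf), (4, 6, .leaf), (6, 10, .leaf), (10, 6, .leaf), (11, 6, .leaf)])), (4, 1, (.node 6 .leaf [(2, 6, .leaf), (3, 6, .leaf), (6, 10,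 .leaf), (10, 6, .leaf), (11, 6, .leaf)])), (6, 10, (.node 1 .leaf [(1, 2, .leaf), (2, 1, .leaf), (3, 1, .leaf), (4, 1, .leaf), (11, 1, .leaf)])), (10, 6, (.node 1 .leaf [(1, 2, .leaf), (2, 1, .leaf), (3, 1, .leaf), (4, 1, .leaf), (11, 1, .leaf)])), (11, 1, (.node 6 .leaf [(2, 6, .leaf), (3, 6, .leaf), (4, 6, .leaf), (6, 10, .leaf), (10, 6, .leaf)]))])), (10, 7, (.node 1 (.node 6 .leaf [(2, 6, .leaf), (3, 6, .leaf), (4, 6, .leaf), (6, 9, .leaf), (9, 6, .leaf), (11, 6, .leaf)]) [(1, 2, (.node 6 .leaf [(3, 6, .leaf), (4, 6, .leaf), (6, 9, .leaf), (9, 6, .leaf), (11, 6, .leaf)])), (2, 1, (.node 6 .leaf [(3, 6, .leaf), (4, 6, .leaf), (6, 9, .leaf), (9, 6, .leaf), (11, 6, .leaf)])), (3, 1, (.node 6 .leaf [(2, 6, .leaf), (4, 6, .leaf), (6, 9, .leaf), (9, 6, .leaf), (11, 6, .leaf)])), (4, 1, (.node 6 .leaf [(2, 6, .leaf), (3, 6,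 .leaf), (6, 9, .leaf), (9, 6, .leaf), (11, 6, .leaf)])), (6, 9, (.node 1 .leaf [(1, 2, .leaf), (2, 1, .leaf), (3, 1, .leaf), (4, 1, .leaf), (11, 1, .leaf)])), (9, 6, (.node 1 .leaf [(1, 2, .leaf), (2, 1, .leaf), (3, 1, .leaf), (4, 1, .leaf), (11, 1, .leaf)])), (11, 1, (.node 6 .leaf [(2, 6, .leaf), (3, 6, .leaf), (4, 6, .leaf), (6, 9, .leaf), (9, 6, .leaf)]))])), (11, 7, (.node 1 (.node 6 .leaf [(2, 6, .leaf), (3, 6, .leaf), (4, 6, .leaf), (6, 9, .leaf), (9, 6, .leaf), (10, 6, .leaf)]) [(1, 2, (.node 6 .leaf [(3, 6, .leaf), (4, 6, .leaf), (6, 9, .leaf), (9, 6, .leaf), (10, 6, .leaf)])), (2, 1, (.node 6 .leaf [(3, 6, .leaf), (4, 6, .leaf), (6, 9, .leaf), (9, 6, .leaf), (10, 6, .leaf)])), (3, 1, (.node 6 .leaf [(2, 6, .leaf), (4, 6, .leaf), (6, 9, .leaf), (9, 6, .leaf), (10, 6, .leaf)])), (4, 1, (.node 6 .leaf [(2, 6,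 .leaf), (3, 6, .leaf), (6, 9, .leaf), (9, 6, .leaf), (10, 6, .leaf)])), (6, 1, (.node 9 .leaf [(2, 9, .leaf), (3, 9, .leaf), (4, 9, .leaf), (9, 10, .leaf), (10, 9, .leaf)])), (9, 1, (.node 6 .leaf [(2, 6, .leaf), (3, 6, .leaf), (4, 6, .leaf), (6, 10, .leaf), (10, 6, .leaf)])), (10, 1, (.node 6 .leaf [(2, 6, .leaf), (3, 6, .leaf), (4, 6, .leaf), (6, 9, .leaf), (9, 6, .leaf)]))]))])), (6, 7, (.node 2 (.node 10 .leaf [(1, 10, .leaf), (3, 10, .leaf), (4, 10, .leaf), (5, 10, .leaf), (8, 10, .leaf), (9, 10, .leaf), (10, 9, (.node 8 .leaf [(1, 8, .leaf), (3, 8, .leaf), (4, 8, .leaf), (5, 8, .leaf), (8, 11, .leaf), (11, 8, .leaf)])), (11, 10, .leaf)]) [(1, 2, (.node 10 .leaf [(3, 10, .leaf), (4, 10, .leaf), (5, 10, .leaf), (8, 10, .leaf), (9, 10, .leaf), (10, 9, (.node 8 .leaf [(3, 8, .leaf), (4, 8, .leaf), (5, 8, .leaf), (8, 11, .leaf), (11,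 8, .leaf)])), (11, 10, .leaf)])), (2, 5, (.node 10 .leaf [(1, 10, .leaf), (3, 10, .leaf), (4, 10, .leaf), (8, 10, .leaf), (9, 10, .leaf), (10, 9, (.node 8 .leaf [(1, 8, .leaf), (3, 8, .leaf), (4, 8, .leaf), (8, 11, .leaf), (11, 8, .leaf)])), (11, 10, .leaf)])), (3, 2, (.node 10 .leaf [(1, 10, .leaf), (4, 10, .leaf), (5, 10, .leaf), (8, 10, .leaf), (9, 10, .leaf), (10, 9, (.node 8 .leaf [(1, 8, .leaf), (4, 8, .leaf), (5, 8, .leaf), (8, 11, .leaf), (11, 8, .leaf)])), (11, 10, .leaf)])), (4, 2, (.node 10 .leaf [(1, 10, .leaf), (3, 10, .leaf), (5, 10, .leaf), (8, 10, .leaf), (9, 10, .leaf), (10, 9, (.node 8 .leaf [(1, 8, .leaf), (3, 8, .leaf), (5, 8, .leaf), (8, 11, .leaf), (11, 8, .leaf)])), (11, 10, .leaf)])), (5, 2, (.node 10 .leaf [(1, 10, .leaf), (3, 10, .leaf), (4, 10, .leaf), (8, 10, .leaf), (9, 10, .leaf), (10, 9, (.node 8 .leaf [(1, 8, .leaf),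 (3, 8, .leaf), (4, 8, .leaf), (8, 11, .leaf), (11, 8, .leaf)])), (11, 10, .leaf)])), (8, 10, (.node 2 .leaf [(1, 2, .leaf), (2, 5, .leaf), (3, 2, .leaf), (4, 2, .leaf), (5, 2, .leaf), (9, 2, .leaf), (11, 2, .leaf)])), (9, 10, (.node 2 .leaf [(1, 2, .leaf), (2, 5, .leaf), (3, 2, .leaf), (4, 2, .leaf), (5, 2, .leaf), (8, 2, .leaf), (11, 2, .leaf)])), (10, 9, (.node 2 (.node 8 .leaf [(1, 8, .leaf), (3, 8, .leaf), (4, 8, .leaf), (5, 8, .leaf), (8, 11, .leaf), (11, 8, .leaf)]) [(1, 2, (.node 8 .leaf [(3, 8, .leaf), (4, 8, .leaf), (5, 8, .leaf), (8, 11, .leaf), (11, 8, .leaf)])), (2, 5, (.node 8 .leaf [(1, 8, .leaf), (3, 8, .leaf), (4, 8, .leaf), (8, 11, .leaf), (11, 8, .leaf)])), (3, 2, (.node 8 .leaf [(1, 8, .leaf), (4, 8, .leaf), (5, 8, .leaf), (8, 11, .leaf), (11, 8, .leaf)])), (4, 2, (.node 8 .leaf [(1, 8, .leaf), (3, 8,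 .leaf), (5, 8, .leaf), (8, 11, .leaf), (11, 8, .leaf)])), (5, 2, (.node 8 .leaf [(1, 8, .leaf), (3, 8, .leaf), (4, 8, .leaf), (8, 11, .leaf), (11, 8, .leaf)])), (8, 11, (.node 2 .leaf [(1, 2, .leaf), (2, 5, .leaf), (3, 2, .leaf), (4, 2, .leaf), (5, 2, .leaf)])), (11, 8, (.node 1 .leaf [(1, 2, .leaf), (2, 1, .leaf), (3, 1, .leaf), (4, 1, .leaf), (5, 1, .leaf)]))])), (11, 8, (.node 1 (.node 9 .leaf [(2, 9, .leaf), (3, 9, .leaf), (4, 9, .leaf), (5, 9, .leaf), (9, 10, .leaf), (10, 9, .leaf)]) [(1, 2, (.node 9 .leaf [(3, 9, .leaf), (4, 9, .leaf), (5, 9, .leaf), (9, 10, .leaf), (10, 9, .leaf)])), (2, 1, (.node 9 .leaf [(3, 9, .leaf), (4, 9, .leaf), (5, 9, .leaf), (9, 10, .leaf), (10, 9, .leaf)])), (3, 1, (.node 9 .leaf [(2, 9, .leaf), (4, 9, .leaf), (5, 9, .leaf), (9, 10, .leaf), (10, 9, .leaf)])), (4, 1, (.node 9 .leaf [(2, 9,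 .leaf), (3, 9, .leaf), (5, 9, .leaf), (9, 10, .leaf), (10, 9, .leaf)])), (5, 1, (.node 9 .leaf [(2, 9, .leaf), (3, 9, .leaf), (4, 9, .leaf), (9, 10, .leaf), (10, 9, .leaf)])), (9, 10, (.node 1 .leaf [(1, 2, .leaf), (2, 1, .leaf), (3, 1, .leaf), (4, 1, .leaf), (5, 1, .leaf)])), (10, 9, (.node 1 .leaf [(1, 2, .leaf), (2, 1, .leaf), (3, 1, .leaf), (4, 1, .leaf), (5, 1, .leaf)]))]))])), (7, 5, (.node 10 (.node 3 .leaf [(1, 3, .leaf), (2, 3, .leaf), (3, 6, .leaf), (4, 3, .leaf), (6, 3, .leaf), (8, 3, .leaf), (9, 3, .leaf), (11, 3, .leaf)]) [(1, 10, (.node 3 .leaf [(2, 3, .leaf), (3, 6, .leaf), (4, 3, .leaf), (6, 3, .leaf), (8, 3, .leaf), (9, 3, .leaf), (11, 3, .leaf)])), (2, 10, (.node 3 .leaf [(1, 3, .leaf), (3, 6, .leaf), (4, 3, .leaf), (6, 3, .leaf), (8, 3, .leaf), (9, 3, .leaf), (11, 3, .leaf)])), (3, 10, (.node 6 .leaf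 [(1, 6, .leaf), (2, 6, .leaf), (4, 6, .leaf), (6, 9, .leaf), (8, 6, .leaf), (9, 6, .leaf), (11, 6, .leaf)])), (4, 10, (.node 3 .leaf [(1, 3, .leaf), (2, 3, .leaf), (3, 6, .leaf), (6, 3, .leaf), (8, 3, .leaf), (9, 3, .leaf), (11, 3, .leaf)])), (6, 10, (.node 3 .leaf [(1, 3, .leaf), (2, 3, .leaf), (3, 9, .leaf), (4, 3, .leaf), (8, 3, .leaf), (9, 3, .leaf), (11, 3, .leaf)])), (8, 10, (.node 3 .leaf [(1, 3, .leaf), (2, 3, .leaf), (3, 6, .leaf), (4, 3, .leaf), (6, 3, .leaf), (9, 3, .leaf), (11, 3, .leaf)])), (9, 10, (.node 3 .leaf [(1, 3, .leaf), (2, 3, .leaf), (3, 6, .leaf), (4, 3, .leaf), (6, 3, .leaf), (8, 3, .leaf), (11, 3, .leaf)])), (10, 9, (.node 8 .leaf [(1, 8, .leaf), (2, 8, .leaf), (3, 8, .leaf), (4, 8, .leaf), (6, 8, .leaf), (8, 11, (.node 4 .leaf [(1, 4, .leaf), (2, 4, .leaf), (3, 4, .leaf), (4, 6, .leaf), (6,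 4, .leaf)])), (11, 8, .leaf)])), (11, 10, (.node 3 .leaf [(1, 3, .leaf), (2, 3, .leaf), (3, 6, .leaf), (4, 3, .leaf), (6, 3, .leaf), (8, 3, .leaf), (9, 3, .leaf)]))])), (8, 7, (.node 2 (.node 10 .leaf [(1, 10, .leaf), (3, 10, .leaf), (4, 10, .leaf), (5, 10, .leaf), (6, 10, .leaf), (9, 10, .leaf), (10, 11, (.node 6 .leaf [(1, 6, .leaf), (3, 6, .leaf), (4, 6, .leaf), (5, 6, .leaf), (6, 9, .leaf), (9, 6, .leaf)])), (11, 10, .leaf)]) [(1, 2, (.node 10 .leaf [(3, 10, .leaf), (4, 10, .leaf), (5, 10, .leaf), (6, 10, .leaf), (9, 10, .leaf), (10, 11, (.node 6 .leaf [(3, 6, .leaf), (4, 6, .leaf), (5, 6, .leaf), (6, 9, .leaf), (9, 6, .leaf)])), (11, 10, .leaf)])), (2, 5, (.node 10 .leaf [(1, 10, .leaf), (3, 10, .leaf), (4, 10, .leaf), (6, 10, .leaf), (9, 10, .leaf), (10, 11, (.node 6 .leaf [(1, 6, .leaf), (3, 6, .leaf), (4, 6, .leaf), (6, 9, .leaf),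 (9, 6, .leaf)])), (11, 10, .leaf)])), (3, 2, (.node 10 .leaf [(1, 10, .leaf), (4, 10, .leaf), (5, 10, .leaf), (6, 10, .leaf), (9, 10, .leaf), (10, 11, (.node 6 .leaf [(1, 6, .leaf), (4, 6, .leaf), (5, 6, .leaf), (6, 9, .leaf), (9, 6, .leaf)])), (11, 10, .leaf)])), (4, 2, (.node 10 .leaf [(1, 10, .leaf), (3, 10, .leaf), (5, 10, .leaf), (6, 10, .leaf), (9, 10, .leaf), (10, 11, (.node 6 .leaf [(1, 6, .leaf), (3, 6, .leaf), (5, 6, .leaf), (6, 9, .leaf), (9, 6, .leaf)])), (11, 10, .leaf)])), (5, 2, (.node 10 .leaf [(1, 10, .leaf), (3, 10, .leaf), (4, 10, .leaf), (6, 10, .leaf), (9, 10, .leaf), (10, 11, (.node 6 .leaf [(1, 6, .leaf), (3, 6, .leaf), (4, 6, .leaf), (6, 9, .leaf), (9, 6, .leaf)])), (11, 10, .leaf)])), (6, 10, (.node 2 .leaf [(1, 2, .leaf), (2, 5, .leaf), (3, 2, .leaf), (4, 2, .leaf), (5, 2, .leaf), (9, 2, .leaf), (11, 2, .leaf)])),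 (9, 10, (.node 2 .leaf [(1, 2, .leaf), (2, 5, .leaf), (3, 2, .leaf), (4, 2, .leaf), (5, 2, .leaf), (6, 2, .leaf), (11, 2, .leaf)])), (10, 11, (.node 2 (.node 6 .leaf [(1, 6, .leaf), (3, 6, .leaf), (4, 6, .leaf), (5, 6, .leaf), (6, 9, .leaf), (9, 6, .leaf)]) [(1, 2, (.node 6 .leaf [(3, 6, .leaf), (4, 6, .leaf), (5, 6, .leaf), (6, 9, .leaf), (9, 6, .leaf)])), (2, 5, (.node 6 .leaf [(1, 6, .leaf), (3, 6, .leaf), (4, 6, .leaf), (6, 9, .leaf), (9, 6, .leaf)])), (3, 2, (.node 6 .leaf [(1, 6, .leaf), (4, 6, .leaf), (5, 6, .leaf), (6, 9, .leaf), (9, 6, .leaf)])), (4, 2, (.node 6 .leaf [(1, 6, .leaf), (3, 6, .leaf), (5, 6, .leaf), (6, 9, .leaf), (9, 6, .leaf)])), (5, 2, (.node 6 .leaf [(1, 6, .leaf), (3, 6, .leaf), (4, 6, .leaf), (6, 9, .leaf), (9, 6, .leaf)])), (6, 9, (.node 2 .leaf [(1, 2, .leaf), (2, 5, .leaf), (3,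 2, .leaf), (4, 2, .leaf), (5, 2, .leaf)])), (9, 6, (.node 2 .leaf [(1, 2, .leaf), (2, 5, .leaf), (3, 2, .leaf), (4, 2, .leaf), (5, 2, .leaf)]))])), (11, 10, (.node 2 .leaf [(1, 2, .leaf), (2, 5, .leaf), (3, 2, .leaf), (4, 2, .leaf), (5, 2, .leaf), (6, 2, .leaf), (9, 2, .leaf)]))])), (9, 7, (.node 2 (.node 10 .leaf [(1, 10, .leaf), (3, 10, .leaf), (4, 10, .leaf), (5, 10, .leaf), (6, 10, .leaf), (8, 10, .leaf), (10, 6, (.node 8 .leaf [(1, 8, .leaf), (3, 8, .leaf), (4, 8, .leaf), (5, 8, .leaf), (8, 11, .leaf), (11, 8, .leaf)])), (11, 10, .leaf)]) [(1, 2, (.node 10 .leaf [(3, 10, .leaf), (4, 10, .leaf), (5, 10, .leaf), (6, 10, .leaf), (8, 10, .leaf), (10, 6, (.node 8 .leaf [(3, 8, .leaf), (4, 8, .leaf), (5, 8, .leaf), (8, 11, .leaf), (11, 8, .leaf)])), (11, 10, .leaf)])), (2, 5, (.node 10 .leaf [(1, 10, .leaf), (3, 10, .leaf), (4, 10, .leaf),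 (6, 10, .leaf), (8, 10, .leaf), (10, 6, (.node 8 .leaf [(1, 8, .leaf), (3, 8, .leaf), (4, 8, .leaf), (8, 11, .leaf), (11, 8, .leaf)])), (11, 10, .leaf)])), (3, 2, (.node 10 .leaf [(1, 10, .leaf), (4, 10, .leaf), (5, 10, .leaf), (6, 10, .leaf), (8, 10, .leaf), (10, 6, (.node 8 .leaf [(1, 8, .leaf), (4, 8, .leaf), (5, 8, .leaf), (8, 11, .leaf), (11, 8, .leaf)])), (11, 10, .leaf)])), (4, 2, (.node 10 .leaf [(1, 10, .leaf), (3, 10, .leaf), (5, 10, .leaf), (6, 10, .leaf), (8, 10, .leaf), (10, 6, (.node 8 .leaf [(1, 8, .leaf), (3, 8, .leaf), (5, 8, .leaf), (8, 11, .leaf), (11, 8, .leaf)])), (11, 10, .leaf)])), (5, 2, (.node 10 .leaf [(1, 10, .leaf), (3, 10, .leaf), (4, 10, .leaf), (6, 10, .leaf), (8, 10, .leaf), (10, 6, (.node 8 .leaf [(1, 8, .leaf), (3, 8, .leaf), (4, 8, .leaf), (8, 11, .leaf), (11, 8, .leaf)])), (11, 10, .leaf)])), (6, 10, (.node 2 .leaf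 [(1, 2, .leaf), (2, 5, .leaf), (3, 2, .leaf), (4, 2, .leaf), (5, 2, .leaf), (8, 2, .leaf), (11, 2, .leaf)])), (8, 10, (.node 2 .leaf [(1, 2, .leaf), (2, 5, .leaf), (3, 2, .leaf), (4, 2, .leaf), (5, 2, .leaf), (6, 2, .leaf), (11, 2, .leaf)])), (10, 6, (.node 2 (.node 8 .leaf [(1, 8, .leaf), (3, 8, .leaf), (4, 8, .leaf), (5, 8, .leaf), (8, 11, .leaf), (11, 8, .leaf)]) [(1, 2, (.node 8 .leaf [(3, 8, .leaf), (4, 8, .leaf), (5, 8, .leaf), (8, 11, .leaf), (11, 8, .leaf)])), (2, 5, (.node 8 .leaf [(1, 8, .leaf), (3, 8, .leaf), (4, 8, .leaf), (8, 11, .leaf), (11, 8, .leaf)])), (3, 2, (.node 8 .leaf [(1, 8, .leaf), (4, 8, .leaf), (5, 8, .leaf), (8, 11, .leaf), (11, 8, .leaf)])), (4, 2, (.node 8 .leaf [(1, 8, .leaf), (3, 8, .leaf), (5, 8, .leaf), (8, 11, .leaf), (11, 8, .leaf)])), (5, 2, (.node 8 .leaf [(1, 8, .leaf), (3, 8, .leaf),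 (4, 8, .leaf), (8, 11, .leaf), (11, 8, .leaf)])), (8, 11, (.node 2 .leaf [(1, 2, .leaf), (2, 5, .leaf), (3, 2, .leaf), (4, 2, .leaf), (5, 2, .leaf)])), (11, 8, (.node 1 .leaf [(1, 2, .leaf), (2, 1, .leaf), (3, 1, .leaf), (4, 1, .leaf), (5, 1, .leaf)]))])), (11, 8, (.node 1 (.node 6 .leaf [(2, 6, .leaf), (3, 6, .leaf), (4, 6, .leaf), (5, 6, .leaf), (6, 10, .leaf), (10, 6, .leaf)]) [(1, 2, (.node 6 .leaf [(3, 6, .leaf), (4, 6, .leaf), (5, 6, .leaf), (6, 10, .leaf), (10, 6, .leaf)])), (2, 1, (.node 6 .leaf [(3, 6, .leaf), (4, 6, .leaf), (5, 6, .leaf), (6, 10, .leaf), (10, 6, .leaf)])), (3, 1, (.node 6 .leaf [(2, 6, .leaf), (4, 6, .leaf), (5, 6, .leaf), (6, 10, .leaf), (10, 6, .leaf)])), (4, 1, (.node 6 .leaf [(2, 6, .leaf), (3, 6, .leaf), (5, 6, .leaf), (6, 10, .leaf), (10, 6, .leaf)])), (5, 1, (.node 6 .leaf [(2, 6, .leaf),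 (3, 6, .leaf), (4, 6, .leaf), (6, 10, .leaf), (10, 6, .leaf)])), (6, 10, (.node 1 .leaf [(1, 2, .leaf), (2, 1, .leaf), (3, 1, .leaf), (4, 1, .leaf), (5, 1, .leaf)])), (10, 6, (.node 1 .leaf [(1, 2, .leaf), (2, 1, .leaf), (3, 1, .leaf), (4, 1, .leaf), (5, 1, .leaf)]))]))])), (10, 7, (.node 2 (.node 6 (.node 8 .leaf [(1, 8, .leaf), (3, 8, .leaf), (4, 8, .leaf), (5, 8, .leaf), (8, 11, .leaf), (9, 8, .leaf), (11, 8, .leaf)]) [(1, 6, (.node 8 .leaf [(3, 8, .leaf), (4, 8, .leaf), (5, 8, .leaf), (8, 11, .leaf), (9, 8, .leaf), (11, 8, .leaf)])), (3, 6, (.node 8 .leaf [(1, 8, .leaf), (4, 8, .leaf), (5, 8, .leaf), (8, 11, .leaf), (9, 8, .leaf), (11, 8, .leaf)])), (4, 6, (.node 8 .leaf [(1, 8, .leaf), (3, 8, .leaf), (5, 8, .leaf), (8, 11, .leaf), (9, 8, .leaf), (11, 8, .leaf)])), (5, 6, (.node 8 .leaf [(1, 8, .leaf), (3, 8, .leaf),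 (4, 8, .leaf), (8, 11, .leaf), (9, 8, .leaf), (11, 8, .leaf)])), (6, 9, (.node 8 .leaf [(1, 8, .leaf), (3, 8, .leaf), (4, 8, .leaf), (5, 8, .leaf), (8, 11, .leaf), (11, 8, .leaf)])), (8, 11, (.node 6 .leaf [(1, 6, .leaf), (3, 6, .leaf), (4, 6, .leaf), (5, 6, .leaf), (6, 9, .leaf), (9, 6, .leaf)])), (9, 6, (.node 8 .leaf [(1, 8, .leaf), (3, 8, .leaf), (4, 8, .leaf), (5, 8, .leaf), (8, 11, .leaf), (11, 8, .leaf)])), (11, 8, (.node 6 .leaf [(1, 6, .leaf), (3, 6, .leaf), (4, 6, .leaf), (5, 6, .leaf), (6, 9, .leaf), (9, 6, .leaf)]))]) [(1, 2, (.node 6 (.node 8 .leaf [(3, 8, .leaf), (4, 8, .leaf), (5, 8, .leaf), (8, 11, .leaf), (9, 8, .leaf), (11, 8, .leaf)]) [(3, 6, (.node 8 .leaf [(4, 8, .leaf), (5, 8, .leaf), (8, 11, .leaf), (9, 8, .leaf), (11, 8, .leaf)])), (4, 6, (.node 8 .leaf [(3, 8, .leaf), (5, 8, .leaf), (8, 11,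 .leaf), (9, 8, .leaf), (11, 8, .leaf)])), (5, 6, (.node 8 .leaf [(3, 8, .leaf), (4, 8, .leaf), (8, 11, .leaf), (9, 8, .leaf), (11, 8, .leaf)])), (6, 9, (.node 8 .leaf [(3, 8, .leaf), (4, 8, .leaf), (5, 8, .leaf), (8, 11, .leaf), (11, 8, .leaf)])), (8, 11, (.node 6 .leaf [(3, 6, .leaf), (4, 6, .leaf), (5, 6, .leaf), (6, 9, .leaf), (9, 6, .leaf)])), (9, 6, (.node 8 .leaf [(3, 8, .leaf), (4, 8, .leaf), (5, 8, .leaf), (8, 11, .leaf), (11, 8, .leaf)])), (11, 8, (.node 6 .leaf [(3, 6, .leaf), (4, 6, .leaf), (5, 6, .leaf), (6, 9, .leaf), (9, 6, .leaf)]))])), (2, 5, (.node 6 (.node 8 .leaf [(1, 8, .leaf), (3, 8, .leaf), (4, 8, .leaf), (8, 11, .leaf), (9, 8, .leaf), (11, 8, .leaf)]) [(1, 6, (.node 8 .leaf [(3, 8, .leaf), (4, 8, .leaf), (8, 11, .leaf), (9, 8, .leaf), (11, 8, .leaf)])), (3, 6, (.node 8 .leaf [(1, 8, .leaf), (4, 8,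 .leaf), (8, 11, .leaf), (9, 8, .leaf), (11, 8, .leaf)])), (4, 6, (.node 8 .leaf [(1, 8, .leaf), (3, 8, .leaf), (8, 11, .leaf), (9, 8, .leaf), (11, 8, .leaf)])), (6, 9, (.node 8 .leaf [(1, 8, .leaf), (3, 8, .leaf), (4, 8, .leaf), (8, 11, .leaf), (11, 8, .leaf)])), (8, 11, (.node 6 .leaf [(1, 6, .leaf), (3, 6, .leaf), (4, 6, .leaf), (6, 9, .leaf), (9, 6, .leaf)])), (9, 6, (.node 8 .leaf [(1, 8, .leaf), (3, 8, .leaf), (4, 8, .leaf), (8, 11, .leaf), (11, 8, .leaf)])), (11, 8, (.node 6 .leaf [(1, 6, .leaf), (3, 6, .leaf), (4, 6, .leaf), (6, 9, .leaf), (9, 6, .leaf)]))])), (3, 2, (.node 6 (.node 8 .leaf [(1, 8, .leaf), (4, 8, .leaf), (5, 8, .leaf), (8, 11, .leaf), (9, 8, .leaf), (11, 8, .leaf)]) [(1, 6, (.node 8 .leaf [(4, 8, .leaf), (5, 8, .leaf), (8, 11, .leaf), (9, 8, .leaf), (11, 8, .leaf)])), (4, 6, (.node 8 .leaf [(1, 8,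 .leaf), (5, 8, .leaf), (8, 11, .leaf), (9, 8, .leaf), (11, 8, .leaf)])), (5, 6, (.node 8 .leaf [(1, 8, .leaf), (4, 8, .leaf), (8, 11, .leaf), (9, 8, .leaf), (11, 8, .leaf)])), (6, 9, (.node 8 .leaf [(1, 8, .leaf), (4, 8, .leaf), (5, 8, .leaf), (8, 11, .leaf), (11, 8, .leaf)])), (8, 11, (.node 6 .leaf [(1, 6, .leaf), (4, 6, .leaf), (5, 6, .leaf), (6, 9, .leaf), (9, 6, .leaf)])), (9, 6, (.node 8 .leaf [(1, 8, .leaf), (4, 8, .leaf), (5, 8, .leaf), (8, 11, .leaf), (11, 8, .leaf)])), (11, 8, (.node 6 .leaf [(1, 6, .leaf), (4, 6, .leaf), (5, 6, .leaf), (6, 9, .leaf), (9, 6, .leaf)]))])), (4, 2, (.node 6 (.node 8 .leaf [(1, 8, .leaf), (3, 8, .leaf), (5, 8, .leaf), (8, 11, .leaf), (9, 8, .leaf), (11, 8, .leaf)]) [(1, 6, (.node 8 .leaf [(3, 8, .leaf), (5, 8, .leaf), (8, 11, .leaf), (9, 8, .leaf), (11, 8, .leaf)])), (3, 6, (.node 8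 .leaf [(1, 8, .leaf), (5, 8, .leaf), (8, 11, .leaf), (9, 8, .leaf), (11, 8, .leaf)])), (5, 6, (.node 8 .leaf [(1, 8, .leaf), (3, 8, .leaf), (8, 11, .leaf), (9, 8, .leaf), (11, 8, .leaf)])), (6, 9, (.node 8 .leaf [(1, 8, .leaf), (3, 8, .leaf), (5, 8, .leaf), (8, 11, .leaf), (11, 8, .leaf)])), (8, 11, (.node 6 .leaf [(1, 6, .leaf), (3, 6, .leaf), (5, 6, .leaf), (6, 9, .leaf), (9, 6, .leaf)])), (9, 6, (.node 8 .leaf [(1, 8, .leaf), (3, 8, .leaf), (5, 8, .leaf), (8, 11, .leaf), (11, 8, .leaf)])), (11, 8, (.node 6 .leaf [(1, 6, .leaf), (3, 6, .leaf), (5, 6, .leaf), (6, 9, .leaf), (9, 6, .leaf)]))])), (5, 2, (.node 6 (.node 8 .leaf [(1, 8, .leaf), (3, 8, .leaf), (4, 8, .leaf), (8, 11, .leaf), (9, 8, .leaf), (11, 8, .leaf)]) [(1, 6, (.node 8 .leaf [(3, 8, .leaf), (4, 8, .leaf), (8, 11, .leaf), (9, 8, .leaf), (11, 8, .leaf)])),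 (3, 6, (.node 8 .leaf [(1, 8, .leaf), (4, 8, .leaf), (8, 11, .leaf), (9, 8, .leaf), (11, 8, .leaf)])), (4, 6, (.node 8 .leaf [(1, 8, .leaf), (3, 8, .leaf), (8, 11, .leaf), (9, 8, .leaf), (11, 8, .leaf)])), (6, 9, (.node 8 .leaf [(1, 8, .leaf), (3, 8, .leaf), (4, 8, .leaf), (8, 11, .leaf), (11, 8, .leaf)])), (8, 11, (.node 6 .leaf [(1, 6, .leaf), (3, 6, .leaf), (4, 6, .leaf), (6, 9, .leaf), (9, 6, .leaf)])), (9, 6, (.node 8 .leaf [(1, 8, .leaf), (3, 8, .leaf), (4, 8, .leaf), (8, 11, .leaf), (11, 8, .leaf)])), (11, 8, (.node 6 .leaf [(1, 6, .leaf), (3, 6, .leaf), (4, 6, .leaf), (6, 9, .leaf), (9, 6, .leaf)]))])), (6, 9, (.node 2 (.node 8 .leaf [(1, 8, .leaf), (3, 8, .leaf), (4, 8, .leaf), (5, 8, .leaf), (8, 11, .leaf), (11, 8, .leaf)]) [(1, 2, (.node 8 .leaf [(3, 8, .leaf), (4, 8, .leaf), (5, 8, .leaf), (8, 11, .leaf),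 (11, 8, .leaf)])), (2, 5, (.node 8 .leaf [(1, 8, .leaf), (3, 8, .leaf), (4, 8, .leaf), (8, 11, .leaf), (11, 8, .leaf)])), (3, 2, (.node 8 .leaf [(1, 8, .leaf), (4, 8, .leaf), (5, 8, .leaf), (8, 11, .leaf), (11, 8, .leaf)])), (4, 2, (.node 8 .leaf [(1, 8, .leaf), (3, 8, .leaf), (5, 8, .leaf), (8, 11, .leaf), (11, 8, .leaf)])), (5, 2, (.node 8 .leaf [(1, 8, .leaf), (3, 8, .leaf), (4, 8, .leaf), (8, 11, .leaf), (11, 8, .leaf)])), (8, 11, (.node 2 .leaf [(1, 2, .leaf), (2, 5, .leaf), (3, 2, .leaf), (4, 2, .leaf), (5, 2, .leaf)])), (11, 8, (.node 1 .leaf [(1, 2, .leaf), (2, 1, .leaf), (3, 1, .leaf), (4, 1, .leaf), (5, 1, .leaf)]))])), (8, 11, (.node 2 (.node 6 .leaf [(1, 6, .leaf), (3, 6, .leaf), (4, 6, .leaf), (5, 6, .leaf), (6, 9, .leaf), (9, 6, .leaf)]) [(1, 2, (.node 6 .leaf [(3, 6, .leaf), (4, 6, .leaf), (5, 6, .leaf),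 (6, 9, .leaf), (9, 6, .leaf)])), (2, 5, (.node 6 .leaf [(1, 6, .leaf), (3, 6, .leaf), (4, 6, .leaf), (6, 9, .leaf), (9, 6, .leaf)])), (3, 2, (.node 6 .leaf [(1, 6, .leaf), (4, 6, .leaf), (5, 6, .leaf), (6, 9, .leaf), (9, 6, .leaf)])), (4, 2, (.node 6 .leaf [(1, 6, .leaf), (3, 6, .leaf), (5, 6, .leaf), (6, 9, .leaf), (9, 6, .leaf)])), (5, 2, (.node 6 .leaf [(1, 6, .leaf), (3, 6, .leaf), (4, 6, .leaf), (6, 9, .leaf), (9, 6, .leaf)])), (6, 9, (.node 2 .leaf [(1, 2, .leaf), (2, 5, .leaf), (3, 2, .leaf), (4, 2, .leaf), (5, 2, .leaf)])), (9, 6, (.node 2 .leaf [(1, 2, .leaf), (2, 5, .leaf), (3, 2, .leaf), (4, 2, .leaf), (5, 2, .leaf)]))])), (9, 6, (.node 2 (.node 8 .leaf [(1, 8, .leaf), (3, 8, .leaf), (4, 8, .leaf), (5, 8, .leaf), (8, 11, .leaf), (11, 8, .leaf)]) [(1, 2, (.node 8 .leaf [(3, 8, .leaf), (4, 8, .leaf),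 (5, 8, .leaf), (8, 11, .leaf), (11, 8, .leaf)])), (2, 5, (.node 8 .leaf [(1, 8, .leaf), (3, 8, .leaf), (4, 8, .leaf), (8, 11, .leaf), (11, 8, .leaf)])), (3, 2, (.node 8 .leaf [(1, 8, .leaf), (4, 8, .leaf), (5, 8, .leaf), (8, 11, .leaf), (11, 8, .leaf)])), (4, 2, (.node 8 .leaf [(1, 8, .leaf), (3, 8, .leaf), (5, 8, .leaf), (8, 11, .leaf), (11, 8, .leaf)])), (5, 2, (.node 8 .leaf [(1, 8, .leaf), (3, 8, .leaf), (4, 8, .leaf), (8, 11, .leaf), (11, 8, .leaf)])), (8, 11, (.node 2 .leaf [(1, 2, .leaf), (2, 5, .leaf), (3, 2, .leaf), (4, 2, .leaf), (5, 2, .leaf)])), (11, 8, (.node 1 .leaf [(1, 2, .leaf), (2, 1, .leaf), (3, 1, .leaf), (4, 1, .leaf), (5, 1, .leaf)]))])), (11, 8, (.node 1 (.node 6 .leaf [(2, 6, .leaf), (3, 6, .leaf), (4, 6, .leaf), (5, 6, .leaf), (6, 9, .leaf), (9, 6, .leaf)]) [(1, 2, (.node 6 .leaf [(3, 6, .leaf),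 (4, 6, .leaf), (5, 6, .leaf), (6, 9, .leaf), (9, 6, .leaf)])), (2, 1, (.node 6 .leaf [(3, 6, .leaf), (4, 6, .leaf), (5, 6, .leaf), (6, 9, .leaf), (9, 6, .leaf)])), (3, 1, (.node 6 .leaf [(2, 6, .leaf), (4, 6, .leaf), (5, 6, .leaf), (6, 9, .leaf), (9, 6, .leaf)])), (4, 1, (.node 6 .leaf [(2, 6, .leaf), (3, 6, .leaf), (5, 6, .leaf), (6, 9, .leaf), (9, 6, .leaf)])), (5, 1, (.node 6 .leaf [(2, 6, .leaf), (3, 6, .leaf), (4, 6, .leaf), (6, 9, .leaf), (9, 6, .leaf)])), (6, 9, (.node 1 .leaf [(1, 2, .leaf), (2, 1, .leaf), (3, 1, .leaf), (4, 1, .leaf), (5, 1, .leaf)])), (9, 6, (.node 1 .leaf [(1, 2, .leaf), (2, 1, .leaf), (3, 1, .leaf), (4, 1, .leaf), (5, 1, .leaf)]))]))])), (11, 7, (.node 2 (.node 10 .leaf [(1, 10, .leaf), (3, 10, .leaf), (4, 10, .leaf), (5, 10, .leaf), (6, 10, .leaf), (8, 10, .leaf), (9, 10, .leaf), (10, 8,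 (.node 6 .leaf [(1, 6, .leaf), (3, 6, .leaf), (4, 6, .leaf), (5, 6, .leaf), (6, 9, .leaf), (9, 6, .leaf)]))]) [(1, 2, (.node 10 .leaf [(3, 10, .leaf), (4, 10, .leaf), (5, 10, .leaf), (6, 10, .leaf), (8, 10, .leaf), (9, 10, .leaf), (10, 8, (.node 6 .leaf [(3, 6, .leaf), (4, 6, .leaf), (5, 6, .leaf), (6, 9, .leaf), (9, 6, .leaf)]))])), (2, 5, (.node 10 .leaf [(1, 10, .leaf), (3, 10, .leaf), (4, 10, .leaf), (6, 10, .leaf), (8, 10, .leaf), (9, 10, .leaf), (10, 8, (.node 6 .leaf [(1, 6, .leaf), (3, 6, .leaf), (4, 6, .leaf), (6, 9, .leaf), (9, 6, .leaf)]))])), (3, 2, (.node 10 .leaf [(1, 10, .leaf), (4, 10, .leaf), (5, 10, .leaf), (6, 10, .leaf), (8, 10, .leaf), (9, 10, .leaf), (10, 8, (.node 6 .leaf [(1, 6, .leaf), (4, 6, .leaf), (5, 6, .leaf), (6, 9, .leaf), (9, 6, .leaf)]))])), (4, 2, (.node 10 .leaf [(1, 10, .leaf), (3, 10, .leaf), (5,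 10, .leaf), (6, 10, .leaf), (8, 10, .leaf), (9, 10, .leaf), (10, 8, (.node 6 .leaf [(1, 6, .leaf), (3, 6, .leaf), (5, 6, .leaf), (6, 9, .leaf), (9, 6, .leaf)]))])), (5, 2, (.node 10 .leaf [(1, 10, .leaf), (3, 10, .leaf), (4, 10, .leaf), (6, 10, .leaf), (8, 10, .leaf), (9, 10, .leaf), (10, 8, (.node 6 .leaf [(1, 6, .leaf), (3, 6, .leaf), (4, 6, .leaf), (6, 9, .leaf), (9, 6, .leaf)]))])), (6, 8, (.node 1 (.node 9 .leaf [(2, 9, .leaf), (3, 9, .leaf), (4, 9, .leaf), (5, 9, .leaf), (9, 10, .leaf), (10, 9, .leaf)]) [(1, 2, (.node 9 .leaf [(3, 9, .leaf), (4, 9, .leaf), (5, 9, .leaf), (9, 10, .leaf), (10, 9, .leaf)])), (2, 1, (.node 9 .leaf [(3, 9, .leaf), (4, 9, .leaf), (5, 9, .leaf), (9, 10, .leaf), (10, 9, .leaf)])), (3, 1, (.node 9 .leaf [(2, 9, .leaf), (4, 9, .leaf), (5, 9, .leaf), (9, 10, .leaf), (10, 9, .leaf)])), (4, 1, (.node 9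 .leaf [(2, 9, .leaf), (3, 9, .leaf), (5, 9, .leaf), (9, 10, .leaf), (10, 9, .leaf)])), (5, 1, (.node 9 .leaf [(2, 9, .leaf), (3, 9, .leaf), (4, 9, .leaf), (9, 10, .leaf), (10, 9, .leaf)])), (9, 10, (.node 1 .leaf [(1, 2, .leaf), (2, 1, .leaf), (3, 1, .leaf), (4, 1, .leaf), (5, 1, .leaf)])), (10, 9, (.node 1 .leaf [(1, 2, .leaf), (2, 1, .leaf), (3, 1, .leaf), (4, 1, .leaf), (5, 1, .leaf)]))])), (8, 10, (.node 2 .leaf [(1, 2, .leaf), (2, 5, .leaf), (3, 2, .leaf), (4, 2, .leaf), (5, 2, .leaf), (6, 2, .leaf), (9, 2, .leaf)])), (9, 8, (.node 1 (.node 6 .leaf [(2, 6, .leaf), (3, 6, .leaf), (4, 6, .leaf), (5, 6, .leaf), (6, 10, .leaf), (10, 6, .leaf)]) [(1, 2, (.node 6 .leaf [(3, 6, .leaf), (4, 6, .leaf), (5, 6, .leaf), (6, 10, .leaf), (10, 6, .leaf)])), (2, 1, (.node 6 .leaf [(3, 6, .leaf), (4, 6, .leaf), (5, 6, .leaf), (6,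 10, .leaf), (10, 6, .leaf)])), (3, 1, (.node 6 .leaf [(2, 6, .leaf), (4, 6, .leaf), (5, 6, .leaf), (6, 10, .leaf), (10, 6, .leaf)])), (4, 1, (.node 6 .leaf [(2, 6, .leaf), (3, 6, .leaf), (5, 6, .leaf), (6, 10, .leaf), (10, 6, .leaf)])), (5, 1, (.node 6 .leaf [(2, 6, .leaf), (3, 6, .leaf), (4, 6, .leaf), (6, 10, .leaf), (10, 6, .leaf)])), (6, 10, (.node 1 .leaf [(1, 2, .leaf), (2, 1, .leaf), (3, 1, .leaf), (4, 1, .leaf), (5, 1, .leaf)])), (10, 6, (.node 1 .leaf [(1, 2, .leaf), (2, 1, .leaf), (3, 1, .leaf), (4, 1, .leaf), (5, 1, .leaf)]))])), (10, 8, (.node 1 (.node 6 .leaf [(2, 6, .leaf), (3, 6, .leaf), (4, 6, .leaf), (5, 6, .leaf), (6, 9, .leaf), (9, 6, .leaf)]) [(1, 2, (.node 6 .leaf [(3, 6, .leaf), (4, 6, .leaf), (5, 6, .leaf), (6, 9, .leaf), (9, 6, .leaf)])), (2, 1, (.node 6 .leaf [(3, 6, .leaf), (4, 6, .leaf), (5,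 6, .leaf), (6, 9, .leaf), (9, 6, .leaf)])), (3, 1, (.node 6 .leaf [(2, 6, .leaf), (4, 6, .leaf), (5, 6, .leaf), (6, 9, .leaf), (9, 6, .leaf)])), (4, 1, (.node 6 .leaf [(2, 6, .leaf), (3, 6, .leaf), (5, 6, .leaf), (6, 9, .leaf), (9, 6, .leaf)])), (5, 1, (.node 6 .leaf [(2, 6, .leaf), (3, 6, .leaf), (4, 6, .leaf), (6, 9, .leaf), (9, 6, .leaf)])), (6, 9, (.node 1 .leaf [(1, 2, .leaf), (2, 1, .leaf), (3, 1, .leaf), (4, 1, .leaf), (5, 1, .leaf)])), (9, 6, (.node 1 .leaf [(1, 2, .leaf), (2, 1, .leaf), (3, 1, .leaf), (4, 1, .leaf), (5, 1, .leaf)]))]))]))])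
def certLoc3 : Cert :=
(.node 4 (.node 1 (.node 7 .leaf [(0, 7, .leaf), (2, 7, .leaf), (3, 7, .leaf), (5, 7, .leaf), (6, 7, .leaf), (7, 3, (.node 5 .leaf [(0, 5, .leaf), (2, 5, .leaf), (5, 8, .leaf), (6, 5, .leaf), (8, 5, .leaf)])), (8, 7, .leaf)]) [(0, 1, (.node 7 .leaf [(2, 7, .leaf), (3, 7, .leaf), (5, 7, .leaf), (6, 7, .leaf), (7, 3, (.node 5 .leaf [(2, 5, .leaf), (5, 8, .leaf), (6, 5, .leaf), (8, 5, .leaf)])), (8, 7, .leaf)])), (1, 3, (.node 5 .leaf [(0, 5, .leaf), (2, 5, .leaf), (5, 2, (.node 7 .leaf [(0, 7, .leaf), (6, 7, .leaf), (7, 8, .leaf), (8, 7, .leaf)])), (6, 5, .leaf), (7, 5, .leaf), (8, 5, .leaf)])), (2, 1, (.node 7 .leaf [(0, 7, .leaf), (3, 7, .leaf), (5, 7, .leaf), (6, 7, .leaf), (7, 3, (.node 5 .leaf [(0, 5, .leaf), (5, 8, .leaf), (6, 5, .leaf), (8, 5, .leaf)])), (8, 7, .leaf)])), (3, 1, (.node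 7 .leaf [(0, 7, .leaf), (2, 7, .leaf), (5, 7, .leaf), (6, 7, .leaf), (7, 6, (.node 5 .leaf [(0, 5, .leaf), (2, 5, .leaf), (5, 8, .leaf), (8, 5, .leaf)])), (8, 7, .leaf)])), (5, 1, (.node 7 .leaf [(0, 7, .leaf), (2, 7, .leaf), (3, 7, .leaf), (6, 7, .leaf), (7, 8, (.node 3 .leaf [(0, 3, .leaf), (2, 3, .leaf), (3, 6, .leaf), (6, 3, .leaf)])), (8, 7, .leaf)])), (6, 1, (.node 7 .leaf [(0, 7, .leaf), (2, 7, .leaf), (3, 7, .leaf), (5, 7, .leaf), (7, 3, (.node 5 .leaf [(0, 5, .leaf), (2, 5, .leaf), (5, 8, .leaf), (8, 5, .leaf)])), (8, 7, .leaf)])), (7, 1, (.node 3 (.node 5 .leaf [(0, 5, .leaf), (2, 5, .leaf), (5, 8, .leaf), (6, 5, .leaf), (8, 5, .leaf)]) [(0, 3, (.node 5 .leaf [(2, 5, .leaf), (5, 8, .leaf), (6, 5, .leaf), (8, 5, .leaf)])), (2, 3, (.node 5 .leaf [(0, 5, .leaf), (5, 8, .leaf), (6, 5, .leaf), (8, 5,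 .leaf)])), (3, 6, (.node 5 .leaf [(0, 5, .leaf), (2, 5, .leaf), (5, 8, .leaf), (8, 5, .leaf)])), (5, 8, (.node 3 .leaf [(0, 3, .leaf), (2, 3, .leaf), (3, 6, .leaf), (6, 3, .leaf)])), (6, 3, (.node 5 .leaf [(0, 5, .leaf), (2, 5, .leaf), (5, 8, .leaf), (8, 5, .leaf)])), (8, 5, (.node 3 .leaf [(0, 3, .leaf), (2, 3, .leaf), (3, 6, .leaf), (6, 3, .leaf)]))])), (8, 1, (.node 7 .leaf [(0, 7, .leaf), (2, 7, .leaf), (3, 7, .leaf), (5, 7, .leaf), (6, 7, .leaf), (7, 5, (.node 3 .leaf [(0, 3, .leaf), (2, 3, .leaf), (3, 6, .leaf), (6, 3, .leaf)]))]))]) [(0, 4, (.node 1 (.node 7 .leaf [(2, 7, .leaf), (3, 7, .leaf), (5, 7, .leaf), (6, 7, .leaf), (7, 3, (.node 5 .leaf [(2, 5, .leaf), (5, 8, .leaf), (6, 5, .leaf), (8, 5, .leaf)])), (8, 7, .leaf)]) [(1, 3, (.node 5 .leaf [(2, 5, .leaf), (5, 2, (.node 7 .leaf [(6, 7, .leaf),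 (7, 8, .leaf), (8, 7, .leaf)])), (6, 5, .leaf), (7, 5, .leaf), (8, 5, .leaf)])), (2, 1, (.node 7 .leaf [(3, 7, .leaf), (5, 7, .leaf), (6, 7, .leaf), (7, 3, (.node 5 .leaf [(5, 8, .leaf), (6, 5, .leaf), (8, 5, .leaf)])), (8, 7, .leaf)])), (3, 1, (.node 7 .leaf [(2, 7, .leaf), (5, 7, .leaf), (6, 7, .leaf), (7, 6, (.node 5 .leaf [(2, 5, .leaf), (5, 8, .leaf), (8, 5, .leaf)])), (8, 7, .leaf)])), (5, 1, (.node 7 .leaf [(2, 7, .leaf), (3, 7, .leaf), (6, 7, .leaf), (7, 8, (.node 3 .leaf [(2, 3, .leaf), (3, 6, .leaf), (6, 3, .leaf)])), (8, 7, .leaf)])), (6, 1, (.node 7 .leaf [(2, 7, .leaf), (3, 7, .leaf), (5, 7, .leaf), (7, 3, (.node 5 .leaf [(2, 5, .leaf), (5, 8, .leaf), (8, 5, .leaf)])), (8, 7, .leaf)])), (7, 1, (.node 3 (.node 5 .leaf [(2, 5, .leaf), (5, 8, .leaf), (6, 5, .leaf), (8, 5, .leaf)]) [(2, 3, (.node 5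 .leaf [(5, 8, .leaf), (6, 5, .leaf), (8, 5, .leaf)])), (3, 6, (.node 5 .leaf [(2, 5, .leaf), (5, 8, .leaf), (8, 5, .leaf)])), (5, 8, (.node 3 .leaf [(2, 3, .leaf), (3, 6, .leaf), (6, 3, .leaf)])), (6, 3, (.node 5 .leaf [(2, 5, .leaf), (5, 8, .leaf), (8, 5, .leaf)])), (8, 5, (.node 3 .leaf [(2, 3, .leaf), (3, 6, .leaf), (6, 3, .leaf)]))])), (8, 1, (.node 7 .leaf [(2, 7, .leaf), (3, 7, .leaf), (5, 7, .leaf), (6, 7, .leaf), (7, 5, (.node 3 .leaf [(2, 3, .leaf), (3, 6, .leaf), (6, 3, .leaf)]))]))])), (1, 3, (.node 2 (.node 7 .leaf [(0, 7, .leaf), (4, 7, .leaf), (5, 7, .leaf), (6, 7, .leaf), (7, 8, .leaf), (8, 7, .leaf)]) [(0, 2, (.node 7 .leaf [(4, 7, .leaf), (5, 7, .leaf), (6, 7, .leaf), (7, 8, .leaf), (8, 7, .leaf)])), (2, 5, (.node 4 .leaf [(0, 4, .leaf), (4, 0, (.node 6 .leaf [(6, 7, .leaf), (7, 6, .leaf),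 (8, 6, .leaf)])), (6, 4, .leaf), (7, 4, .leaf), (8, 4, .leaf)])), (4, 2, (.node 7 .leaf [(0, 7, .leaf), (5, 7, .leaf), (6, 7, .leaf), (7, 8, .leaf), (8, 7, .leaf)])), (5, 2, (.node 7 .leaf [(0, 7, .leaf), (4, 7, .leaf), (6, 7, .leaf), (7, 8, .leaf), (8, 7, .leaf)])), (6, 2, (.node 7 .leaf [(0, 7, .leaf), (4, 7, .leaf), (5, 7, .leaf), (7, 8, .leaf), (8, 7, .leaf)])), (7, 2, (.node 8 .leaf [(0, 8, .leaf), (4, 8, .leaf), (5, 8, .leaf), (6, 8, .leaf), (8, 5, (.node 4 .leaf [(0, 4, .leaf), (4, 6, .leaf), (6, 4, .leaf)]))])), (8, 2, (.node 7 .leaf [(0, 7, .leaf), (4, 7, .leaf), (5, 7, .leaf), (6, 7, .leaf), (7, 5, (.node 4 .leaf [(0, 4, .leaf), (4, 6, .leaf), (6, 4, .leaf)]))]))])), (2, 4, (.node 1 (.node 7 .leaf [(0, 7, .leaf), (3, 7, .leaf), (5, 7, .leaf), (6, 7, .leaf), (7, 3, (.node 5 .leaf [(0, 5, .leaf), (5,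 8, .leaf), (6, 5, .leaf), (8, 5, .leaf)])), (8, 7, .leaf)]) [(0, 1, (.node 7 .leaf [(3, 7, .leaf), (5, 7, .leaf), (6, 7, .leaf), (7, 3, (.node 5 .leaf [(5, 8, .leaf), (6, 5, .leaf), (8, 5, .leaf)])), (8, 7, .leaf)])), (1, 5, (.node 3 .leaf [(0, 3, .leaf), (3, 0, (.node 6 .leaf [(6, 7, .leaf), (7, 6, .leaf), (8, 6, .leaf)])), (6, 3, .leaf), (7, 3, .leaf), (8, 3, .leaf)])), (3, 1, (.node 7 .leaf [(0, 7, .leaf), (5, 7, .leaf), (6, 7, .leaf), (7, 6, (.node 5 .leaf [(0, 5, .leaf), (5, 8, .leaf), (8, 5, .leaf)])), (8, 7, .leaf)])), (5, 1, (.node 7 .leaf [(0, 7, .leaf), (3, 7, .leaf), (6, 7, .leaf), (7, 8, (.node 3 .leaf [(0, 3, .leaf), (3, 6, .leaf), (6, 3, .leaf)])), (8, 7, .leaf)])), (6, 1, (.node 7 .leaf [(0, 7, .leaf), (3, 7, .leaf), (5, 7, .leaf), (7, 3, (.node 5 .leaf [(0, 5, .leaf), (5, 8, .leaf), (8, 5,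 .leaf)])), (8, 7, .leaf)])), (7, 1, (.node 3 (.node 5 .leaf [(0, 5, .leaf), (5, 8, .leaf), (6, 5, .leaf), (8, 5, .leaf)]) [(0, 3, (.node 5 .leaf [(5, 8, .leaf), (6, 5, .leaf), (8, 5, .leaf)])), (3, 6, (.node 5 .leaf [(0, 5, .leaf), (5, 8, .leaf), (8, 5, .leaf)])), (5, 8, (.node 3 .leaf [(0, 3, .leaf), (3, 6, .leaf), (6, 3, .leaf)])), (6, 3, (.node 5 .leaf [(0, 5, .leaf), (5, 8, .leaf), (8, 5, .leaf)])), (8, 5, (.node 3 .leaf [(0, 3, .leaf), (3, 6, .leaf), (6, 3, .leaf)]))])), (8, 1, (.node 7 .leaf [(0, 7, .leaf), (3, 7, .leaf), (5, 7, .leaf), (6, 7, .leaf), (7, 5, (.node 3 .leaf [(0, 3, .leaf), (3, 6, .leaf), (6, 3, .leaf)]))]))])), (3, 1, (.node 4 (.node 7 .leaf [(0, 7, .leaf), (2, 7, .leaf), (5, 7, .leaf), (6, 7, .leaf), (7, 6, (.node 5 .leaf [(0, 5, .leaf), (2, 5, .leaf), (5, 8, .leaf), (8, 5, .leaf)])),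 (8, 7, .leaf)]) [(0, 4, (.node 7 .leaf [(2, 7, .leaf), (5, 7, .leaf), (6, 7, .leaf), (7, 6, (.node 5 .leaf [(2, 5, .leaf), (5, 8, .leaf), (8, 5, .leaf)])), (8, 7, .leaf)])), (2, 4, (.node 7 .leaf [(0, 7, .leaf), (5, 7, .leaf), (6, 7, .leaf), (7, 6, (.node 5 .leaf [(0, 5, .leaf), (5, 8, .leaf), (8, 5, .leaf)])), (8, 7, .leaf)])), (4, 6, (.node 5 .leaf [(0, 5, .leaf), (2, 5, .leaf), (5, 8, .leaf), (7, 5, .leaf), (8, 5, .leaf)])), (5, 6, (.node 8 .leaf [(0, 8, .leaf), (2, 8, .leaf), (4, 8, .leaf), (7, 8, .leaf), (8, 7, (.node 2 .leaf [(0, 2, .leaf), (2, 4, .leaf), (4, 2, .leaf)]))])), (6, 7, (.node 4 .leaf [(0, 4, .leaf), (2, 4, .leaf), (4, 0, (.node 2 .leaf [(2, 5, .leaf), (5, 2, .leaf), (8, 2, .leaf)])), (5, 4, .leaf), (8, 4, .leaf)])), (7, 6, (.node 5 .leaf [(0, 5, .leaf), (2, 5, .leaf), (4, 5, .leaf), (5,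 8, .leaf), (8, 5, .leaf)])), (8, 6, (.node 5 .leaf [(0, 5, .leaf), (2, 5, .leaf), (4, 5, .leaf), (5, 7, (.node 2 .leaf [(0, 2, .leaf), (2, 4, .leaf), (4, 2, .leaf)])), (7, 5, .leaf)]))])), (4, 1, (.node 6 (.node 5 .leaf [(0, 5, .leaf), (2, 5, .leaf), (3, 5, .leaf), (5, 8, .leaf), (7, 5, .leaf), (8, 5, .leaf)]) [(0, 6, (.node 5 .leaf [(2, 5, .leaf), (3, 5, .leaf), (5, 8, .leaf), (7, 5, .leaf), (8, 5, .leaf)])), (2, 6, (.node 5 .leaf [(0, 5, .leaf), (3, 5, .leaf), (5, 8, .leaf), (7, 5, .leaf), (8, 5, .leaf)])), (3, 6, (.node 5 .leaf [(0, 5, .leaf), (2, 5, .leaf), (5, 8, .leaf), (7, 5, .leaf), (8, 5, .leaf)])), (5, 7, (.node 0 (.node 2 .leaf [(2, 8, .leaf), (3, 2, .leaf), (6, 2, .leaf), (8, 2, .leaf)]) [(0, 2, (.node 3 .leaf [(3, 6, .leaf), (6, 3, .leaf), (8, 3, .leaf)])), (2, 8, (.node 0 .leaf [(0, 3, .leaf),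 (3, 0, .leaf), (6, 0, .leaf)])), (3, 0, (.node 2 .leaf [(2, 8, .leaf), (6, 2, .leaf), (8, 2, .leaf)])), (6, 0, (.node 2 .leaf [(2, 8, .leaf), (3, 2, .leaf), (8, 2, .leaf)])), (8, 2, (.node 0 .leaf [(0, 3, .leaf), (3, 0, .leaf), (6, 0, .leaf)]))])), (6, 7, (.node 0 (.node 2 .leaf [(2, 5, .leaf), (3, 2, .leaf), (5, 2, .leaf), (8, 2, .leaf)]) [(0, 3, (.node 2 .leaf [(2, 5, .leaf), (5, 2, .leaf), (8, 2, .leaf)])), (2, 0, (.node 5 .leaf [(3, 5, .leaf), (5, 8, .leaf), (8, 5, .leaf)])), (3, 0, (.node 2 .leaf [(2, 5, .leaf), (5, 2, .leaf), (8, 2, .leaf)])), (5, 0, (.node 2 .leaf [(2, 8, .leaf), (3, 2, .leaf), (8, 2, .leaf)])), (8, 0, (.node 2 .leaf [(2, 5, .leaf), (3, 2, .leaf), (5, 2, .leaf)]))])), (7, 6, (.node 5 .leaf [(0, 5, .leaf), (2, 5, .leaf), (3, 5, .leaf), (5, 8, .leaf), (8, 5, .leaf)])), (8, 7, (.node 0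 (.node 2 .leaf [(2, 5, .leaf), (3, 2, .leaf), (5, 2, .leaf), (6, 2, .leaf)]) [(0, 2, (.node 3 .leaf [(3, 6, .leaf), (5, 3, .leaf), (6, 3, .leaf)])), (2, 5, (.node 0 .leaf [(0, 3, .leaf), (3, 0, .leaf), (6, 0, .leaf)])), (3, 0, (.node 2 .leaf [(2, 5, .leaf), (5, 2, .leaf), (6, 2, .leaf)])), (5, 2, (.node 0 .leaf [(0, 3, .leaf), (3, 0, .leaf), (6, 0, .leaf)])), (6, 0, (.node 2 .leaf [(2, 5, .leaf), (3, 2, .leaf), (5, 2, .leaf)]))]))])), (5, 1, (.node 4 (.node 7 .leaf [(0, 7, .leaf), (2, 7, .leaf), (3, 7, .leaf), (6, 7, .leaf), (7, 8, (.node 3 .leaf [(0, 3, .leaf), (2, 3, .leaf), (3, 6, .leaf), (6, 3, .leaf)])), (8, 7, .leaf)]) [(0, 4, (.node 7 .leaf [(2, 7, .leaf), (3, 7, .leaf), (6, 7, .leaf), (7, 8, (.node 3 .leaf [(2, 3, .leaf), (3, 6, .leaf), (6, 3, .leaf)])), (8, 7, .leaf)])), (2, 4, (.node 7 .leaf [(0,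 7, .leaf), (3, 7, .leaf), (6, 7, .leaf), (7, 8, (.node 3 .leaf [(0, 3, .leaf), (3, 6, .leaf), (6, 3, .leaf)])), (8, 7, .leaf)])), (3, 6, (.node 8 .leaf [(0, 8, .leaf), (2, 8, .leaf), (4, 8, .leaf), (7, 8, .leaf), (8, 7, (.node 2 .leaf [(0, 2, .leaf), (2, 4, .leaf), (4, 2, .leaf)]))])), (4, 7, (.node 0 (.node 2 .leaf [(2, 8, .leaf), (3, 2, .leaf), (6, 2, .leaf), (8, 2, .leaf)]) [(0, 2, (.node 3 .leaf [(3, 6, .leaf), (6, 3, .leaf), (8, 3, .leaf)])), (2, 8, (.node 0 .leaf [(0, 3, .leaf), (3, 0, .leaf), (6, 0, .leaf)])), (3, 0, (.node 2 .leaf [(2, 8, .leaf), (6, 2, .leaf), (8, 2, .leaf)])), (6, 0, (.node 2 .leaf [(2, 8, .leaf), (3, 2, .leaf), (8, 2, .leaf)])), (8, 2, (.node 0 .leaf [(0, 3, .leaf), (3, 0, .leaf), (6, 0, .leaf)]))])), (6, 7, (.node 4 .leaf [(0, 4, .leaf), (2, 4, .leaf), (3, 4, .leaf), (4, 0, (.node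 2 .leaf [(2, 8, .leaf), (3, 2, .leaf), (8, 2, .leaf)])), (8, 4, .leaf)])), (7, 8, (.node 3 .leaf [(0, 3, .leaf), (2, 3, .leaf), (3, 6, .leaf), (4, 3, .leaf), (6, 3, .leaf)])), (8, 7, (.node 4 .leaf [(0, 4, .leaf), (2, 4, .leaf), (3, 4, .leaf), (4, 2, (.node 0 .leaf [(0, 3, .leaf), (3, 0, .leaf), (6, 0, .leaf)])), (6, 4, .leaf)]))])), (6, 4, (.node 1 (.node 7 .leaf [(0, 7, .leaf), (2, 7, .leaf), (3, 7, .leaf), (5, 7, .leaf), (7, 3, (.node 5 .leaf [(0, 5, .leaf), (2, 5, .leaf), (5, 8, .leaf), (8, 5, .leaf)])), (8, 7, .leaf)]) [(0, 1, (.node 7 .leaf [(2, 7, .leaf), (3, 7, .leaf), (5, 7, .leaf), (7, 3, (.node 5 .leaf [(2, 5, .leaf), (5, 8, .leaf), (8, 5, .leaf)])), (8, 7, .leaf)])), (1, 3, (.node 5 .leaf [(0, 5, .leaf), (2, 5, .leaf), (5, 2, (.node 7 .leaf [(0, 7, .leaf), (7, 8, .leaf), (8, 7, .leaf)])), (7,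 5, .leaf), (8, 5, .leaf)])), (2, 1, (.node 7 .leaf [(0, 7, .leaf), (3, 7, .leaf), (5, 7, .leaf), (7, 3, (.node 5 .leaf [(0, 5, .leaf), (5, 8, .leaf), (8, 5, .leaf)])), (8, 7, .leaf)])), (3, 7, (.node 1 .leaf [(0, 1, .leaf), (1, 0, (.node 2 .leaf [(2, 5, .leaf), (5, 2, .leaf), (8, 2, .leaf)])), (2, 1, .leaf), (5, 1, .leaf), (8, 1, .leaf)])), (5, 3, (.node 1 (.node 7 .leaf [(0, 7, .leaf), (2, 7, .leaf), (7, 8, .leaf), (8, 7, .leaf)]) [(0, 1, (.node 7 .leaf [(2, 7, .leaf), (7, 8, .leaf), (8, 7, .leaf)])), (1, 2, (.node 7 .leaf [(0, 7, .leaf), (7, 8, .leaf), (8, 7, .leaf)])), (2, 1, (.node 7 .leaf [(0, 7, .leaf), (7, 8, .leaf), (8, 7, .leaf)])), (7, 8, (.node 1 .leaf [(0, 1, .leaf), (1, 2, .leaf), (2, 1, .leaf)])), (8, 7, (.node 1 .leaf [(0, 1, .leaf), (1, 2, .leaf), (2, 1, .leaf)]))])), (7, 3, (.node 5 .leaf [(0,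 5, .leaf), (1, 5, .leaf), (2, 5, .leaf), (5, 8, (.node 1 .leaf [(0, 1, .leaf), (1, 2, .leaf), (2, 1, .leaf)])), (8, 5, .leaf)])), (8, 3, (.node 5 .leaf [(0, 5, .leaf), (1, 5, .leaf), (2, 5, .leaf), (5, 7, (.node 1 .leaf [(0, 1, .leaf), (1, 2, .leaf), (2, 1, .leaf)])), (7, 5, .leaf)]))])), (7, 3, (.node 2 (.node 8 .leaf [(0, 8, .leaf), (1, 8, .leaf), (4, 8, .leaf), (5, 8, .leaf), (6, 8, .leaf), (8, 5, (.node 4 .leaf [(0, 4, .leaf), (1, 4, .leaf), (4, 6, .leaf), (6, 4, .leaf)]))]) [(0, 2, (.node 8 .leaf [(1, 8, .leaf), (4, 8, .leaf), (5, 8, .leaf), (6, 8, .leaf), (8, 5, (.node 4 .leaf [(1, 4, .leaf), (4, 6, .leaf), (6, 4, .leaf)]))])), (1, 2, (.node 8 .leaf [(0, 8, .leaf), (4, 8, .leaf), (5, 8, .leaf), (6, 8, .leaf), (8, 5, (.node 4 .leaf [(0, 4, .leaf), (4, 6, .leaf), (6, 4, .leaf)]))])), (2, 5, (.node 4 .leaf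 [(0, 4, .leaf), (1, 4, .leaf), (4, 0, (.node 6 .leaf [(1, 6, .leaf), (6, 8, .leaf), (8, 6, .leaf)])), (6, 4, .leaf), (8, 4, .leaf)])), (4, 5, (.node 0 (.node 6 .leaf [(1, 6, .leaf), (2, 6, .leaf), (6, 8, .leaf), (8, 6, .leaf)]) [(0, 1, (.node 6 .leaf [(2, 6, .leaf), (6, 8, .leaf), (8, 6, .leaf)])), (1, 0, (.node 6 .leaf [(2, 6, .leaf), (6, 8, .leaf), (8, 6, .leaf)])), (2, 0, (.node 6 .leaf [(1, 6, .leaf), (6, 8, .leaf), (8, 6, .leaf)])), (6, 8, (.node 0 .leaf [(0, 1, .leaf), (1, 0, .leaf), (2, 0, .leaf)])), (8, 6, (.node 0 .leaf [(0, 1, .leaf), (1, 0, .leaf), (2, 0, .leaf)]))])), (5, 8, (.node 1 .leaf [(0, 1, .leaf), (1, 2, .leaf), (2, 1, .leaf), (4, 1, .leaf), (6, 1, .leaf)])), (6, 4, (.node 5 .leaf [(0, 5, .leaf), (1, 5, .leaf), (2, 5, .leaf), (5, 8, (.node 1 .leaf [(0, 1, .leaf), (1, 2, .leaf), (2, 1,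 .leaf)])), (8, 5, .leaf)])), (8, 5, (.node 4 .leaf [(0, 4, .leaf), (1, 4, .leaf), (2, 4, .leaf), (4, 6, (.node 0 .leaf [(0, 1, .leaf), (1, 0, .leaf), (2, 0, .leaf)])), (6, 4, .leaf)]))])), (8, 4, (.node 1 (.node 7 .leaf [(0, 7, .leaf), (2, 7, .leaf), (3, 7, .leaf), (5, 7, .leaf), (6, 7, .leaf), (7, 5, (.node 3 .leaf [(0, 3, .leaf), (2, 3, .leaf), (3, 6, .leaf), (6, 3, .leaf)]))]) [(0, 1, (.node 7 .leaf [(2, 7, .leaf), (3, 7, .leaf), (5, 7, .leaf), (6, 7, .leaf), (7, 5, (.node 3 .leaf [(2, 3, .leaf), (3, 6, .leaf), (6, 3, .leaf)]))])), (1, 5, (.node 3 .leaf [(0, 3, .leaf), (2, 3, .leaf), (3, 0, (.node 6 .leaf [(2, 6, .leaf), (6, 7, .leaf), (7, 6, .leaf)])), (6, 3, .leaf), (7, 3, .leaf)])), (2, 1, (.node 7 .leaf [(0, 7, .leaf), (3, 7, .leaf), (5, 7, .leaf), (6, 7, .leaf), (7, 5, (.node 3 .leaf [(0, 3, .leaf),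 (3, 6, .leaf), (6, 3, .leaf)]))])), (3, 5, (.node 0 (.node 6 .leaf [(1, 6, .leaf), (2, 6, .leaf), (6, 7, .leaf), (7, 6, .leaf)]) [(0, 1, (.node 6 .leaf [(2, 6, .leaf), (6, 7, .leaf), (7, 6, .leaf)])), (1, 0, (.node 6 .leaf [(2, 6, .leaf), (6, 7, .leaf), (7, 6, .leaf)])), (2, 0, (.node 6 .leaf [(1, 6, .leaf), (6, 7, .leaf), (7, 6, .leaf)])), (6, 7, (.node 0 .leaf [(0, 1, .leaf), (1, 0, .leaf), (2, 0, .leaf)])), (7, 6, (.node 0 .leaf [(0, 1, .leaf), (1, 0, .leaf), (2, 0, .leaf)]))])), (5, 7, (.node 1 .leaf [(0, 1, .leaf), (1, 2, (.node 0 .leaf [(0, 3, .leaf), (3, 0, .leaf), (6, 0, .leaf)])), (2, 1, .leaf), (3, 1, .leaf), (6, 1, .leaf)])), (6, 3, (.node 5 .leaf [(0, 5, .leaf), (1, 5, .leaf), (2, 5, .leaf), (5, 7, (.node 1 .leaf [(0, 1, .leaf), (1, 2, .leaf), (2, 1, .leaf)])), (7, 5, .leaf)])), (7, 5, (.node 3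 .leaf [(0, 3, .leaf), (1, 3, .leaf), (2, 3, .leaf), (3, 6, (.node 0 .leaf [(0, 1, .leaf), (1, 0, .leaf), (2, 0, .leaf)])), (6, 3, .leaf)]))]))])
set_option maxRecDepth 10000 in
theorem chk_certW2 : chk (List.range 6) (locAdj 2) 2 certW2 [0] [] = true := by decide
set_option maxRecDepth 10000 in
theorem chk_certW3 : chk (List.range 9) (locAdj 3) 3 certW3 [0] [] = true := by decide
set_option maxRecDepth 100000 in
theorem chk_certW4 : chk (List.range 12) (locAdj 4) 4 certW4 [0] [] = true := by decide
set_option maxRecDepth 100000 in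
theorem chk_certLoc3 : chk (List.range 9) (locAdj 3) 4 certLoc3 [] [] = true := by decide

end MBD
namespace MBD

open SimpleGraph

/-- Embedding of local ids into the `3 × n` grid, at column offset `off`. -/
def emb (n off : ℕ) (hn : 0 < n) (m : ℕ) : Fin 3 × Fin n :=
  (⟨m % 3, Nat.mod_lt m (by norm_num)⟩, ⟨(off + m / 3) % n, Nat.mod_lt _ hn⟩)

theorem emb_adj {n off w : ℕ} (hn : 0 < n) (hwn : off + w ≤ n) :
    ∀ i ∈ List.range (3*w), ∀ j ∈ List.range (3*w), locAdj w i j = true →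
      emb n off hn i = emb n off hn j ∨
        (pathGraph 3 □ pathGraph n).Adj (emb n off hn i) (emb n off hn j) := by
  intro i hi j hj hadj
  rw [List.mem_range] at hi hj
  rw [locAdj] at hadj
  simp only [Bool.and_eq_true, Bool.or_eq_true, beq_iff_eq, decide_eq_true_eq] at hadj
  have hci : (off + i / 3) % n = off + i / 3 := Nat.mod_eq_of_lt (by omega)
  have hcj : (off + j / 3) % n = off + j / 3 := Nat.mod_eq_of_lt (by omega)
  rcases hadj.2 with (hij | ⟨hc, hr⟩) | ⟨hr, hc⟩
  · left; subst hij; rfl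
  · right
    rw [boxProd_adj]
    left
    refine ⟨?_, ?_⟩
    · rw [pathGraph_adj]
      show i % 3 + 1 = j % 3 ∨ j % 3 + 1 = i % 3
      exact hr
    · show (⟨(off + i / 3) % n, _⟩ : Fin n) = ⟨(off + j / 3) % n, _⟩
      exact Fin.ext (show (off + i / 3) % n = (off + j / 3) % n by rw [hci, hcj, hc])
  · right
    rw [boxProd_adj]
    right
    refine ⟨?_, ?_⟩
    · rw [pathGraph_adj]
      show (off + i / 3) % n + 1 = (off + j / 3) % n ∨
        (off + j / 3) % n + 1 = (off + i / 3) % n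
      rw [hci, hcj]
      omega
    · show (⟨i % 3, _⟩ : Fin 3) = ⟨j % 3, _⟩
      exact Fin.ext (show i % 3 = j % 3 from hr)

theorem emb_inj {n off w : ℕ} (hn : 0 < n) (hwn : off + w ≤ n) :
    ∀ i ∈ List.range (3*w), ∀ j ∈ List.range (3*w),
      emb n off hn i = emb n off hn j → i = j := by
  intro i hi j hj h
  rw [List.mem_range] at hi hj
  have h1 : i % 3 = j % 3 := congrArg (fun p => (p.1 : ℕ)) h
  have h2 : (off + i / 3) % n = (off + j / 3) % n := congrArg (fun p => (p.2 : ℕ)) h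
  rw [Nat.mod_eq_of_lt (by omega), Nat.mod_eq_of_lt (by omega)] at h2
  omega

theorem mem_emb_iff {n off w : ℕ} (hn : 0 < n) (hwn : off + w ≤ n) (v : Fin 3 × Fin n) :
    v ∈ ((List.range (3*w)).map (emb n off hn)).toFinset ↔
      off ≤ (v.2 : ℕ) ∧ (v.2 : ℕ) < off + w := by
  rw [List.mem_toFinset, List.mem_map]
  constructor
  · rintro ⟨m, hm, rfl⟩
    rw [List.mem_range] at hm
    show off ≤ (off + m / 3) % n ∧ (off + m / 3) % n < off + w
    rw [Nat.mod_eq_of_lt (by omega)]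
    omega
  · rintro ⟨h1, h2⟩
    refine ⟨3 * ((v.2 : ℕ) - off) + (v.1 : ℕ), ?_, ?_⟩
    · rw [List.mem_range]
      have := v.1.isLt
      omega
    · have hv1 := v.1.isLt
      have hv2 := v.2.isLt
      refine Prod.ext (Fin.ext ?_) (Fin.ext ?_)
      · show (3 * ((v.2 : ℕ) - off) + (v.1 : ℕ)) % 3 = (v.1 : ℕ)
        omega
      · show (off + (3 * ((v.2 : ℕ) - off) + (v.1 : ℕ)) / 3) % n = (v.2 : ℕ)
        have : (3 * ((v.2 : ℕ) - off) + (v.1 : ℕ)) / 3 = (v.2 : ℕ) - off := by omega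
        rw [this, Nat.mod_eq_of_lt (by omega)]
        omega

/-- Main upper-bound construction: split the grid into a first block of width `w0`
(where Dominator makes his first move) and `qq` blocks of width 3. -/
def boff (w0 : ℕ) (i : ℕ) : ℕ := if i = 0 then 0 else w0 + 3*(i-1)
def bwd (w0 : ℕ) (i : ℕ) : ℕ := if i = 0 then w0 else 3
def bK (w0 : ℕ) (i : ℕ) : ℕ := if i = 0 then w0 else 4

theorem grid_upper (n w0 qq : ℕ) (hn : 0 < n) (hw0 : 0 < w0) (hsplit : n = w0 + 3*qq)
    (cert0 : Cert) (hc0 : chk (List.range (3*w0)) (locAdj w0) w0 cert0 [0] [] = true) :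
    DomD (pathGraph 3 □ pathGraph n) ((w0 + 4*qq) + 1) ∅ ∅ := by
  classical
  set G := pathGraph 3 □ pathGraph n with hG
  set ι := Fin (qq + 1) with hι
  have hoff : ∀ i : ι, boff w0 (i : ℕ) + bwd w0 (i : ℕ) ≤ n := by
    intro i
    have := i.isLt
    by_cases h : (i : ℕ) = 0 <;> simp [boff, bwd, h] <;> omega
  set B : ι → Finset (Fin 3 × Fin n) :=
    fun i => ((List.range (3 * bwd w0 (i : ℕ))).map (emb n (boff w0 (i : ℕ)) hn)).toFinset
    with hBdef
  have hmemB : ∀ (i : ι) v, v ∈ B i ↔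
      boff w0 (i : ℕ) ≤ (v.2 : ℕ) ∧ (v.2 : ℕ) < boff w0 (i : ℕ) + bwd w0 (i : ℕ) :=
    fun i v => mem_emb_iff hn (hoff i) v
  have hdisj : ∀ i j : ι, i ≠ j → Disjoint (B i) (B j) := by
    intro i j hij
    rw [Finset.disjoint_left]
    intro v h1 h2
    rw [hmemB] at h1 h2
    have hine : (i : ℕ) ≠ (j : ℕ) := fun h => hij (Fin.ext h)
    by_cases hi0 : (i : ℕ) = 0 <;> by_cases hj0 : (j : ℕ) = 0 <;>
      simp only [boff, bwd, hi0, hj0, if_pos, if_neg, if_true, if_false] at h1 h2 <;>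
      omega
  have hcover : ∀ v : Fin 3 × Fin n, ∃ i, v ∈ B i := by
    intro v
    have hv2 := v.2.isLt
    by_cases h : (v.2 : ℕ) < w0
    · refine ⟨⟨0, by omega⟩, ?_⟩
      rw [hmemB]
      simp only [boff, bwd]
      norm_num
      omega
    · refine ⟨⟨((v.2 : ℕ) - w0)/3 + 1, by omega⟩, ?_⟩
      rw [hmemB]
      simp only [boff, bwd]
      norm_num
      omega
  set r1 : Fin 3 × Fin n := emb n 0 hn 0 with hr1def
  set K : ι → ℕ := fun i => bK w0 (i : ℕ) with hKdef
  set DF : ι → Finset (Fin 3 × Fin n) :=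
    fun i => if (i : ℕ) = 0 then {r1} else ∅ with hDFdef
  have hKsum : ∑ i, K i = w0 + 4*qq := by
    rw [hKdef, Fin.sum_univ_succ]
    have h2 : ∀ i : Fin qq, bK w0 ((i.succ : Fin (qq+1)) : ℕ) = 4 := by
      intro i; simp [bK, Fin.val_succ]
    rw [Finset.sum_congr rfl (fun i _ => h2 i)]
    simp [bK, Finset.sum_const, Nat.mul_comm]
  have hr1B : r1 ∈ B 0 := by
    rw [hmemB]
    have hv : ((r1.2 : ℕ)) = 0 := by
      show (0 + 0 / 3) % n = 0
      simp
    rw [hv]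
    simp only [boff, bwd]
    norm_num
    omega
  have hloc : ∀ i : ι, Loc G (B i) (K i) (DF i) (∅ ∩ B i) := by
    intro i
    rw [Finset.empty_inter]
    by_cases hi0 : (i : ℕ) = 0
    · have hi : i = 0 := Fin.ext hi0
      subst hi
      have h := chk_sound (G := G) (List.range (3*w0)) (locAdj w0) (emb n 0 hn)
        (emb_adj hn (by omega)) (emb_inj hn (by omega)) w0 cert0 [0] []
        (by intro x hx; simp at hx; subst hx; simp [List.mem_range]; omega)
        (by intro x hx; simp at hx)
        hc0
      have hB : B 0 = ((List.range (3*w0)).map (emb n 0 hn)).toFinset := by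
        rw [hBdef]
        simp only [bwd, boff]
        norm_num
      have hDF : DF 0 = (([0] : List ℕ).map (emb n 0 hn)).toFinset := by
        rw [hDFdef]
        simp only [Fin.val_zero, if_pos rfl]
        simp [hr1def]
      have hK : K 0 = w0 := by simp [hKdef, bK]
      have hS : ((([] : List ℕ).map (emb n 0 hn)).toFinset : Finset (Fin 3 × Fin n)) = ∅ := by
        simp
      rw [hB, hDF, hK, ← hS]
      exact h
    · have hwn3 : boff w0 (i : ℕ) + 3 ≤ n := by
        have h3 := hoff i
        simp only [bwd, if_neg hi0] at h3
        exact h3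
      have h := chk_sound (G := G) (List.range (3*3)) (locAdj 3) (emb n (boff w0 (i : ℕ)) hn)
        (emb_adj hn hwn3) (emb_inj hn hwn3)
        4 certLoc3 [] []
        (by intro x hx; simp at hx) (by intro x hx; simp at hx)
        chk_certLoc3
      have hB : B i = ((List.range (3*3)).map (emb n (boff w0 (i : ℕ)) hn)).toFinset := by
        rw [hBdef]
        simp only [bwd, if_neg hi0]
      have hK : K i = 4 := by rw [hKdef]; simp only [bK, if_neg hi0]
      have hDF : DF i = ∅ := by rw [hDFdef]; simp [hi0]
      have hS : ((([] : List ℕ).map (emb n (boff w0 (i : ℕ)) hn)).toFinset :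
          Finset (Fin 3 × Fin n)) = ∅ := by simp
      rw [hB, hK, hDF, ← hS]
      exact h
  have hmove : DomS G (w0 + 4*qq) {r1} ∅ := by
    refine comp_S B (w0 + 4*qq) K DF {r1} ∅ hKsum.symm hdisj hcover ?_ ?_ hloc
    · intro i
      by_cases hi0 : (i : ℕ) = 0
      · have heq : i = 0 := Fin.ext hi0
        subst heq
        rw [hDFdef]
        simp only [Fin.val_zero, if_pos rfl]
        exact Finset.singleton_subset_iff.mpr hr1B
      · rw [hDFdef]
        simp [hi0]
    · intro v
      rw [hDFdef]
      constructor
      · intro hv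
        refine ⟨0, ?_⟩
        simp only [Fin.val_zero, if_pos rfl]
        exact hv
      · rintro ⟨i, hi⟩
        by_cases hi0 : (i : ℕ) = 0
        · simp only [hi0, if_pos rfl] at hi
          exact hi
        · simp only [hi0, if_neg] at hi
          exact absurd hi (Finset.notMem_empty v)
  exact DomD.move r1 (Finset.notMem_empty r1) (Finset.notMem_empty r1) hmove

end MBD
namespace MBD

open SimpleGraph

/-- Closed vertical closure of a set of rows in a column. -/
def vcl (T : Finset (Fin 3)) : Finset (Fin 3) :=
  Finset.univ.filter (fun r => ∃ t ∈ T, t = r ∨ (t : ℕ) + 1 = (r : ℕ) ∨ (r : ℕ) + 1 = (t : ℕ))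

/-- Rows of the current column undominated so far (`P` = previous column, `T` = current). -/
def usetF (P T : Finset (Fin 3)) : Finset (Fin 3) := Finset.univ \ (vcl T ∪ P)

def encF (s : Finset (Fin 3)) : ℕ :=
  (if (0 : Fin 3) ∈ s then 1 else 0) + (if (1 : Fin 3) ∈ s then 2 else 0) +
    (if (2 : Fin 3) ∈ s then 4 else 0)

/-- Potential table for the column DP. -/
def gtab : List ℤ :=
  [1, -1, 0, -3, -1, -2, -3, -5,
   1, -1, 0, -3, 0, -2, -3, -5,
   1, -1, 0, -3, -1, -2, -3, -5,
   2, -1, 0, -3, 0, -2, -3, -5,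
   1, 0, 0, -3, -1, -2, -3, -5,
   3, 0, 0, -3, 0, -2, -3, -5,
   2, 0, 0, -3, -1, -2, -3, -5,
   4, 0, 0, -3, 0, -2, -3, -5]

def gpot (s u : Finset (Fin 3)) : ℤ := gtab.getD (8 * encF s + encF u) 0

theorem gF1 : ∀ T : Finset (Fin 3), 3 + gpot T (usetF ∅ T) ≤ 4 * (T.card : ℤ) := by decide
theorem gF2 : ∀ P U T : Finset (Fin 3), U ⊆ T →
    3 + gpot T (usetF P T) ≤ 4 * (T.card : ℤ) + gpot P U := by decide
theorem gF3 : ∀ S : Finset (Fin 3), 1 ≤ gpot S ∅ := by decide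

variable {n : ℕ}

def colD (n : ℕ) (D : Finset (Fin 3 × Fin n)) (j : ℕ) : Finset (Fin 3) :=
  if h : j < n then Finset.univ.filter (fun r => (r, (⟨j, h⟩ : Fin n)) ∈ D) else ∅

def pcolD (n : ℕ) (D : Finset (Fin 3 × Fin n)) (j : ℕ) : Finset (Fin 3) :=
  if j = 0 then ∅ else colD n D (j - 1)

theorem mem_colD {D : Finset (Fin 3 × Fin n)} {j : ℕ} (h : j < n) (r : Fin 3) :
    r ∈ colD n D j ↔ (r, (⟨j, h⟩ : Fin n)) ∈ D := by
  rw [colD, dif_pos h, Finset.mem_filter]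
  simp

theorem grid_lower (hn : 0 < n) (D : Finset (Fin 3 × Fin n))
    (hdom : Dominates (pathGraph 3 □ pathGraph n) D) :
    3 * (n : ℤ) + 1 ≤ 4 * (D.card : ℤ) := by
  classical
  -- the key domination constraint
  have hU : ∀ j, j < n → ∀ r, r ∈ usetF (pcolD n D j) (colD n D j) →
      j + 1 < n ∧ r ∈ colD n D (j + 1) := by
    intro j hj r hr
    rw [usetF, Finset.mem_sdiff, Finset.mem_union] at hr
    push_neg at hr
    obtain ⟨-, hrv, hrp⟩ := hr
    obtain ⟨d, hdD, hdv⟩ := hdom (r, (⟨j, hj⟩ : Fin n))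
    rcases hdv with heq | hadj
    · exfalso
      apply hrv
      rw [vcl, Finset.mem_filter]
      refine ⟨Finset.mem_univ r, r, ?_, Or.inl rfl⟩
      rw [mem_colD hj]
      rwa [heq] at hdD
    · rw [boxProd_adj] at hadj
      rcases hadj with ⟨hadj1, hadj2⟩ | ⟨hadj1, hadj2⟩
    -- vertical neighbor
      · exfalso
        apply hrv
        rw [vcl, Finset.mem_filter]
        refine ⟨Finset.mem_univ r, d.1, ?_, ?_⟩
        · rw [mem_colD hj]
          have : d = (d.1, (⟨j, hj⟩ : Fin n)) := Prod.ext rfl hadj2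
          rwa [this] at hdD
        · rw [pathGraph_adj] at hadj1
          rcases hadj1 with h | h
          · exact Or.inr (Or.inl h)
          · exact Or.inr (Or.inr h)
      · -- horizontal neighbor
        rw [pathGraph_adj] at hadj1
        simp only at hadj1
        rcases hadj1 with h | h
        · -- dominator is in the previous column
          exfalso
          apply hrp
          rw [pcolD, if_neg (by omega : ¬ j = 0)]
          rw [mem_colD (by omega : j - 1 < n)]
          have hd : d = (r, (⟨j - 1, by omega⟩ : Fin n)) := by
            refine Prod.ext hadj2 (Fin.ext ?_)
            show (d.2 : ℕ) = j - 1
            omega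
          rwa [hd] at hdD
        · -- dominator is in the next column
          have hd2 : (d.2 : ℕ) = j + 1 := by omega
          have hjn : j + 1 < n := by
            have := d.2.isLt
            omega
          refine ⟨hjn, ?_⟩
          rw [mem_colD hjn]
          have hd : d = (r, (⟨j + 1, hjn⟩ : Fin n)) := by
            refine Prod.ext hadj2 (Fin.ext ?_)
            show (d.2 : ℕ) = j + 1
            omega
          rwa [hd] at hdD
  -- cardinality split into columns
  have hcard : D.card = ∑ j ∈ Finset.range n, (colD n D j).card := by
    rw [Finset.card_eq_sum_card_fiberwise
      (f := fun v : Fin 3 × Fin n => (v.2 : ℕ)) (t := Finset.range n)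
      (fun x _ => Finset.mem_range.mpr x.2.isLt)]
    refine Finset.sum_congr rfl ?_
    intro j hj
    have hjn : j < n := Finset.mem_range.mp hj
    refine Finset.card_bij' (fun v _ => v.1) (fun r _ => (r, (⟨j, hjn⟩ : Fin n))) ?_ ?_ ?_ ?_
    · intro v hv
      rw [Finset.mem_filter] at hv
      rw [mem_colD hjn]
      have hveq : v = (v.1, (⟨j, hjn⟩ : Fin n)) := Prod.ext rfl (Fin.ext hv.2)
      rw [← hveq]
      exact hv.1
    · intro r hr
      rw [mem_colD hjn] at hr
      rw [Finset.mem_filter]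
      exact ⟨hr, rfl⟩
    · intro v hv
      rw [Finset.mem_filter] at hv
      show ((v.1, (⟨j, hjn⟩ : Fin n)) : Fin 3 × Fin n) = v
      refine Prod.ext rfl (Fin.ext ?_)
      simp [hv.2]
    · intro r hr
      rfl
  -- the DP induction
  have main : ∀ i, 1 ≤ i → i ≤ n →
      3 * (i : ℤ) + gpot (colD n D (i - 1)) (usetF (pcolD n D (i - 1)) (colD n D (i - 1)))
        ≤ 4 * ∑ j ∈ Finset.range i, ((colD n D j).card : ℤ) := by
    intro i
    induction i with
    | zero => omega
    | succ i ih =>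
      intro h1 hle
      rcases Nat.eq_zero_or_pos i with rfl | hi
      · -- base case i + 1 = 1
        simp only [Nat.add_sub_cancel]
        rw [Finset.sum_range_one, pcolD, if_pos rfl]
        have := gF1 (colD n D 0)
        push_cast
        linarith
      · have hstep := gF2 (colD n D (i - 1)) (usetF (pcolD n D (i - 1)) (colD n D (i - 1)))
          (colD n D i) ?_
        · have hih := ih (by omega) (by omega)
          rw [Finset.sum_range_succ]
          have hpc : pcolD n D i = colD n D (i - 1) := by
            rw [pcolD, if_neg (by omega : ¬ i = 0)]
          rw [Nat.add_sub_cancel, hpc]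
          push_cast
          push_cast at hih
          linarith
        · intro r hr
          have := hU (i - 1) (by omega) r hr
          have heq : i - 1 + 1 = i := by omega
          rw [heq] at this
          exact this.2
  have hfin := main n (by omega) le_rfl
  have hUempty : usetF (pcolD n D (n - 1)) (colD n D (n - 1)) = ∅ := by
    rw [Finset.eq_empty_iff_forall_notMem]
    intro r hr
    have := hU (n - 1) (by omega) r hr
    omega
  rw [hUempty] at hfin
  have hg3 := gF3 (colD n D (n - 1))
  have hsum : ((D.card : ℕ) : ℤ) = ∑ j ∈ Finset.range n, ((colD n D j).card : ℤ) := by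
    rw [hcard]
    push_cast
    rfl
  rw [← hsum] at hfin
  linarith

end MBD


/-- For `n ≥ 2`, `⌊(3n+4)/4⌋ ≤ γ_MB(P_3 □ P_n) ≤ (4n + σ(n))/3`, where `σ(n) = 0` if
`3 ∣ n`, `σ(n) = −1` if `n ≡ 1 (mod 3)`, and `σ(n) = 1` if `n ≡ 2 (mod 3)`. -/
theorem stmt_16 (n : ℕ) (hn : 2 ≤ n) :
    (((3 * n + 4) / 4 : ℕ) : ℕ∞) ≤
      MBD.gMB (SimpleGraph.pathGraph 3 □ SimpleGraph.pathGraph n) ∧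
    ∃ k : ℕ, MBD.gMB (SimpleGraph.pathGraph 3 □ SimpleGraph.pathGraph n) = k ∧
      (3 * k : ℤ) ≤ 4 * n + (if n % 3 = 0 then 0 else if n % 3 = 1 then -1 else 1) := by
  have hn0 : 0 < n := by omega
  constructor
  · -- lower bound
    rw [MBD.gMB]
    refine le_sInf ?_
    rintro b ⟨k, hk, rfl⟩
    simp only [Set.mem_setOf_eq] at hk
    obtain ⟨T, hT, hTc⟩ := MBD.domD_card k ∅ ∅ hk
    have hlow := MBD.grid_lower hn0 T hT
    rw [Finset.card_empty] at hTc
    have hlowN : 3 * n + 1 ≤ 4 * T.card := by exact_mod_cast hlow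
    have hfloor : (3 * n + 4) / 4 ≤ k := by omega
    exact_mod_cast Nat.cast_le.mpr hfloor
  · -- upper bound
    have hup : ∃ M : ℕ, MBD.DomD (SimpleGraph.pathGraph 3 □ SimpleGraph.pathGraph n) M ∅ ∅ ∧
        (3 * (M : ℤ)) ≤ 4 * (n : ℤ) +
          (if n % 3 = 0 then 0 else if n % 3 = 1 then -1 else 1) := by
      by_cases h0 : n % 3 = 0
      · refine ⟨(3 + 4*(n/3 - 1)) + 1, ?_, ?_⟩
        · exact MBD.grid_upper n 3 (n/3 - 1) hn0 (by norm_num) (by omega)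
            MBD.certW3 MBD.chk_certW3
        · rw [if_pos h0]; omega
      · by_cases h1 : n % 3 = 1
        · refine ⟨(4 + 4*((n-4)/3)) + 1, ?_, ?_⟩
          · exact MBD.grid_upper n 4 ((n-4)/3) hn0 (by norm_num) (by omega)
              MBD.certW4 MBD.chk_certW4
          · rw [if_neg h0, if_pos h1]; omega
        · refine ⟨(2 + 4*((n-2)/3)) + 1, ?_, ?_⟩
          · exact MBD.grid_upper n 2 ((n-2)/3) hn0 (by norm_num) (by omega)
              MBD.certW2 MBD.chk_certW2
          · rw [if_neg h0, if_neg h1]; omega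
    obtain ⟨M, hM, hMb⟩ := hup
    have hle : MBD.gMB (SimpleGraph.pathGraph 3 □ SimpleGraph.pathGraph n) ≤ (M : ℕ∞) := by
      rw [MBD.gMB]
      exact sInf_le ⟨M, hM, rfl⟩
    have hne : MBD.gMB (SimpleGraph.pathGraph 3 □ SimpleGraph.pathGraph n) ≠ ⊤ := by
      intro h
      rw [h, top_le_iff] at hle
      exact (WithTop.natCast_ne_top M) hle
    have hk : ((ENat.toNat (MBD.gMB (SimpleGraph.pathGraph 3 □ SimpleGraph.pathGraph n)) : ℕ)
        : ℕ∞) = MBD.gMB (SimpleGraph.pathGraph 3 □ SimpleGraph.pathGraph n) :=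
      ENat.coe_toNat hne
    set k := ENat.toNat (MBD.gMB (SimpleGraph.pathGraph 3 □ SimpleGraph.pathGraph n)) with hkdef
    refine ⟨k, hk.symm, ?_⟩
    have hkM : k ≤ M := by
      rw [← hk] at hle
      exact_mod_cast hle
    have h3 : (3 * (k : ℤ)) ≤ 3 * (M : ℤ) := by omega
    linarith
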